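/- arXiv:math/0303169 — 7 statements merged into one kernel-verified Lean document; each statement's English description precedes it below -/
import Mathlib

section
/- Let 1 ≤ l ≤ n be integers and r ∈ ℚ[x_1,...,x_l] a polynomial, viewed in ℚ[x_1,...,x_n]. Then the Vandermonde polynomial V divides ũ_n in ℚ[x_1,...,x_n], and the quotient polynomial R̃_n = ũ_n / V has total degree at most deg r. -/
open MvPolynomial Finset

/-- The Vandermonde polynomial `V = ∏_{1 ≤ i < j ≤ n} (x_i - x_j)`. -/
noncomputable def vand (n : ℕ) : MvPolynomial (Fin n) ℚ :=
  ∏ p ∈ Finset.univ.filter (fun p : Fin n × Fin n => p.1 < p.2), (X p.1 - X p.2)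

/-- `∏_{1 ≤ i ≤ l, i < j ≤ n} (x_i + x_j)`. -/
noncomputable def prodPlus (n l : ℕ) : MvPolynomial (Fin n) ℚ :=
  ∏ p ∈ Finset.univ.filter (fun p : Fin n × Fin n => (p.1 : ℕ) < l ∧ p.1 < p.2),
    (X p.1 + X p.2)

/-- `∏_{l < i < j ≤ n} (x_i - x_j)`. -/
noncomputable def prodMinus (n l : ℕ) : MvPolynomial (Fin n) ℚ :=
  ∏ p ∈ Finset.univ.filter (fun p : Fin n × Fin n => l ≤ (p.1 : ℕ) ∧ p.1 < p.2),
    (X p.1 - X p.2)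

/-- The signed symmetrization `∑_{ω ∈ S(n)} sgn(ω) · f(x_{ω(1)}, …, x_{ω(n)})`. -/
noncomputable def antiSum (n : ℕ) (f : MvPolynomial (Fin n) ℚ) : MvPolynomial (Fin n) ℚ :=
  ∑ ω : Equiv.Perm (Fin n), ((Equiv.Perm.sign ω : ℤ) : ℚ) • rename (⇑ω) f

/-!
A transposition `(i j)` negates `ũ_n`, so `ũ_n` vanishes once `x_j` is replaced by `x_i`, and is
therefore divisible by `x_i - x_j`. These linear forms are pairwise non-associated irreducibles,
so their product `V` divides `ũ_n`. Since `u_n` has degree at most `deg r + deg V` and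
`ℚ[x_1, …, x_n]` is a domain, `deg R̃_n = deg ũ_n - deg V ≤ deg r`.
-/

namespace MvPolynomial

theorem totalDegree_prod_le_card {σ R ι : Type*} [CommSemiring R] (s : Finset ι)
    (f : ι → MvPolynomial σ R) (hf : ∀ i ∈ s, (f i).totalDegree ≤ 1) :
    (∏ i ∈ s, f i).totalDegree ≤ #s :=
  (totalDegree_finsetProd s f).trans <| by simpa using Finset.sum_le_sum hf

variable {σ R : Type*} [CommRing R]

theorem X_sub_X_dvd_sub_rename_update [DecidableEq σ] (i j : σ) (p : MvPolynomial σ R) :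
    X i - X j ∣ p - rename (Function.update id j i) p := by
  rw [← Ideal.mem_span_singleton, ← Ideal.Quotient.eq]
  have h : Ideal.Quotient.mkₐ R (Ideal.span {X i - X j}) =
      (Ideal.Quotient.mkₐ R _).comp (rename (Function.update id j i)) := by
    refine algHom_ext fun k => ?_
    rcases eq_or_ne k j with rfl | hk
    · simp only [AlgHom.comp_apply, rename_X, Function.update_self, Ideal.Quotient.mkₐ_eq_mk,
        Ideal.Quotient.eq, Ideal.mem_span_singleton]
      exact ⟨-1, by ring⟩
    · simp [hk]
  exact congr($h p)

theorem X_sub_X_dvd_iff_rename_update_eq_zero [DecidableEq σ] (i j : σ) (p : MvPolynomial σ R) :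
    X i - X j ∣ p ↔ rename (Function.update id j i) p = 0 := by
  refine ⟨?_, fun h => by simpa [h] using X_sub_X_dvd_sub_rename_update i j p⟩
  rintro ⟨q, rfl⟩
  have : Function.update id j i i = i := by
    rcases eq_or_ne i j with rfl | h <;> simp [*]
  simp [this]

theorem X_sub_X_dvd_of_rename_swap_eq_neg [DecidableEq σ] [IsDomain R] [CharZero R] {i j : σ}
    {p : MvPolynomial σ R} (hp : rename (Equiv.swap i j) p = -p) : X i - X j ∣ p := by
  rw [X_sub_X_dvd_iff_rename_update_eq_zero]
  have hcomp : Function.update id j i ∘ Equiv.swap i j = Function.update id j i := by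
    ext k
    simp only [Function.comp_apply, Function.update_apply, id, Equiv.swap_apply_def]
    split_ifs <;> simp_all
  have := congr(rename (Function.update id j i) $hp)
  rwa [rename_rename, hcomp, map_neg, CharZero.eq_neg_self_iff] at this

theorem irreducible_X_sub_X [IsDomain R] {i j : σ} (h : i ≠ j) :
    Irreducible (X i - X j : MvPolynomial σ R) := by
  classical
  have := irreducible_mul_X_add (-1 : MvPolynomial σ R) (X i) j (by simp) (by simp)
    (by simp [vars_X, h.symm]) isUnit_one.neg.isRelPrime_left
  simpa [sub_eq_neg_add] using this

theorem pairwise_isRelPrime_X_sub_X [LinearOrder σ] [IsDomain R] :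
    {p : σ × σ | p.1 < p.2}.Pairwise
      (Function.onFun IsRelPrime fun p : σ × σ => (X p.1 - X p.2 : MvPolynomial σ R)) := by
  rintro ⟨i, j⟩ (hij : i < j) ⟨k, l⟩ (hkl : k < l) hne
  rw [Function.onFun, (irreducible_X_sub_X hij.ne).isRelPrime_iff_not_dvd,
    X_sub_X_dvd_iff_rename_update_eq_zero]
  simp only [map_sub, rename_X, sub_eq_zero, (X_injective (R := R)).eq_iff, Function.update_apply,
    id]
  split_ifs <;> grind

end MvPolynomial

theorem rename_antiSum {n : ℕ} (τ : Equiv.Perm (Fin n)) (f : MvPolynomial (Fin n) ℚ) :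
    rename τ (antiSum n f) = ((Equiv.Perm.sign τ : ℤ) : ℚ) • antiSum n f := by
  simp only [antiSum, map_sum, map_smul, rename_rename, Finset.smul_sum, smul_smul]
  refine Fintype.sum_equiv (Equiv.mulLeft τ) _ _ fun ω => ?_
  have hsign : ((Equiv.Perm.sign τ : ℤ) : ℚ) * (Equiv.Perm.sign τ : ℤ) = 1 := by
    rw [← Int.cast_mul, ← Units.val_mul, Int.units_mul_self, Units.val_one, Int.cast_one]
  simp only [Equiv.coe_mulLeft, Equiv.Perm.coe_mul, Equiv.Perm.sign_mul, Units.val_mul,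
    Int.cast_mul, ← mul_assoc, hsign, one_mul]

theorem rename_swap_antiSum {n : ℕ} {i j : Fin n} (hij : i ≠ j) (f : MvPolynomial (Fin n) ℚ) :
    rename (Equiv.swap i j) (antiSum n f) = -antiSum n f := by
  simp [rename_antiSum, Equiv.Perm.sign_swap hij]

theorem vand_dvd_of_rename_swap_eq_neg {n : ℕ} {p : MvPolynomial (Fin n) ℚ}
    (hp : ∀ i j : Fin n, i ≠ j → rename (Equiv.swap i j) p = -p) : vand n ∣ p :=
  Finset.prod_dvd_of_isRelPrime
    (pairwise_isRelPrime_X_sub_X.mono fun q hq => by simpa using hq)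
    fun q hq => X_sub_X_dvd_of_rename_swap_eq_neg (hp _ _ (Finset.mem_filter.1 hq).2.ne)

theorem vand_dvd_antiSum (n : ℕ) (f : MvPolynomial (Fin n) ℚ) : vand n ∣ antiSum n f :=
  vand_dvd_of_rename_swap_eq_neg fun _ _ hij => rename_swap_antiSum hij f

theorem totalDegree_antiSum_le (n : ℕ) (f : MvPolynomial (Fin n) ℚ) :
    (antiSum n f).totalDegree ≤ f.totalDegree :=
  totalDegree_finsetSum_le fun _ _ => (totalDegree_smul_le _ _).trans (totalDegree_rename_le _ _)

theorem vand_isHomogeneous (n : ℕ) : (vand n).IsHomogeneous #{p : Fin n × Fin n | p.1 < p.2} := by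
  simpa [vand] using
    IsHomogeneous.prod _ (fun p : Fin n × Fin n => (X p.1 - X p.2 : MvPolynomial _ ℚ)) (fun _ => 1)
      fun p _ => (isHomogeneous_X ℚ p.1).sub (isHomogeneous_X ℚ p.2)

theorem vand_ne_zero (n : ℕ) : vand n ≠ 0 :=
  Finset.prod_ne_zero_iff.2 fun _ hp =>
    sub_ne_zero.2 <| X_injective.ne (Finset.mem_filter.1 hp).2.ne

theorem totalDegree_vand (n : ℕ) : (vand n).totalDegree = #{p : Fin n × Fin n | p.1 < p.2} :=
  (vand_isHomogeneous n).totalDegree (vand_ne_zero n)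

theorem totalDegree_prodPlus_mul_prodMinus_le (n l : ℕ) :
    (prodPlus n l * prodMinus n l).totalDegree ≤ #{p : Fin n × Fin n | p.1 < p.2} := by
  have hcard : #{p : Fin n × Fin n | (p.1 : ℕ) < l ∧ p.1 < p.2} +
      #{p : Fin n × Fin n | l ≤ (p.1 : ℕ) ∧ p.1 < p.2} = #{p : Fin n × Fin n | p.1 < p.2} := by
    rw [← Finset.card_union_of_disjoint (Finset.disjoint_filter.2 fun _ _ h h' => by omega),
      ← Finset.filter_or]
    congr 1; ext; simp only [mem_filter, mem_univ, true_and]; omega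
  refine (totalDegree_mul _ _).trans (hcard ▸ add_le_add ?_ ?_)
  · exact totalDegree_prod_le_card _ _ fun _ _ =>
      (totalDegree_add _ _).trans (by simp [totalDegree_X])
  · exact totalDegree_prod_le_card _ _ fun _ _ =>
      (totalDegree_sub _ _).trans (by simp [totalDegree_X])

theorem vand_dvd_antiSum_and_totalDegree_le_general
    (n l : ℕ) (hln : l ≤ n) (r : MvPolynomial (Fin l) ℚ) :
    ∃ Rtil : MvPolynomial (Fin n) ℚ,
      vand n * Rtil =
        antiSum n (rename (Fin.castLE hln) r * prodPlus n l * prodMinus n l) ∧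
      Rtil.totalDegree ≤ r.totalDegree := by
  obtain ⟨Rtil, hR⟩ :=
    vand_dvd_antiSum n (rename (Fin.castLE hln) r * prodPlus n l * prodMinus n l)
  refine ⟨Rtil, hR.symm, ?_⟩
  rcases eq_or_ne Rtil 0 with rfl | hR0
  · simp
  have hdeg : (vand n * Rtil).totalDegree ≤ r.totalDegree + (vand n).totalDegree := by
    rw [← hR, mul_assoc]
    refine (totalDegree_antiSum_le n _).trans <| (totalDegree_mul _ _).trans ?_
    rw [totalDegree_vand]
    exact add_le_add (totalDegree_rename_le _ _) (totalDegree_prodPlus_mul_prodMinus_le n l)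
  rw [totalDegree_mul_of_isDomain (vand_ne_zero n) hR0] at hdeg
  omega

/-- the Vandermonde polynomial divides `ũ_n`, and the quotient `R̃_n` has
total degree at most `deg r`. -/
theorem vand_dvd_antiSum_and_totalDegree_le
    (n l : ℕ) (hl : 1 ≤ l) (hln : l ≤ n) (r : MvPolynomial (Fin l) ℚ) :
    ∃ Rtil : MvPolynomial (Fin n) ℚ,
      vand n * Rtil =
        antiSum n (rename (Fin.castLE hln) r * prodPlus n l * prodMinus n l) ∧
      Rtil.totalDegree ≤ r.totalDegree :=
  vand_dvd_antiSum_and_totalDegree_le_general n l hln r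
end

section
/- Let 1 ≤ l ≤ n be integers and r ∈ ℚ[x_1,...,x_l] a polynomial, viewed in ℚ[x_1,...,x_n]. If there exist indices 1 ≤ i < j ≤ l such that r is invariant under exchanging the variables x_i and x_j, then ũ_n = 0. -/
open MvPolynomial Finset

/-- If `f` is fixed by an odd permutation, its signed symmetrization vanishes. -/
lemma antiSum_eq_zero_of_fix (n : ℕ) (f : MvPolynomial (Fin n) ℚ)
    (τ : Equiv.Perm (Fin n)) (hsgn : Equiv.Perm.sign τ = -1)
    (hfix : rename (⇑τ) f = f) : antiSum n f = 0 := by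
  have key : antiSum n f = -antiSum n f := by
    unfold antiSum
    rw [← Finset.sum_neg_distrib]
    apply Fintype.sum_bijective (fun ω : Equiv.Perm (Fin n) => ω * τ)
      (Group.mulRight_bijective τ)
    intro ω
    have h1 : rename (⇑(ω * τ)) f = rename (⇑ω) f := by
      rw [Equiv.Perm.coe_mul, ← rename_rename, hfix]
    have h2 : Equiv.Perm.sign (ω * τ) = -Equiv.Perm.sign ω := by
      rw [map_mul, hsgn, mul_neg_one]
    rw [h1, h2]
    push_cast
    rw [neg_smul, neg_neg]
  have h2 : antiSum n f + antiSum n f = 0 := by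
    nth_rewrite 2 [key]; ring
  have h3 : (2 : ℚ) • antiSum n f = 0 := by
    rw [two_smul]; exact h2
  calc antiSum n f = ((2 : ℚ)⁻¹ * 2) • antiSum n f := by norm_num
    _ = (2 : ℚ)⁻¹ • ((2 : ℚ) • antiSum n f) := by rw [mul_smul]
    _ = 0 := by rw [h3, smul_zero]

/-- if `r` is symmetric in two of the variables `x_i, x_j` with
`i < j ≤ l`, then `ũ_n = 0`. -/
theorem antiSum_eq_zero_of_symm
    (n l : ℕ) (hl : 1 ≤ l) (hln : l ≤ n) (r : MvPolynomial (Fin l) ℚ)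
    (i j : Fin l) (hij : i < j) (hsym : rename (⇑(Equiv.swap i j)) r = r) :
    antiSum n (rename (Fin.castLE hln) r * prodPlus n l * prodMinus n l) = 0 := by
  set i' : Fin n := Fin.castLE hln i with hi'
  set j' : Fin n := Fin.castLE hln j with hj'
  have hne : i' ≠ j' := by
    simp only [hi', hj', Ne, Fin.ext_iff, Fin.coe_castLE]
    exact fun h => absurd (Fin.ext h) (ne_of_lt hij)
  set τ : Equiv.Perm (Fin n) := Equiv.swap i' j' with hτ
  have hτl : ∀ a : Fin n, (a : ℕ) < l → ((τ a : Fin n) : ℕ) < l := by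
    intro a ha
    rcases eq_or_ne a i' with rfl | hi1
    · simp only [hτ, Equiv.swap_apply_left, hj', Fin.coe_castLE]; exact j.2
    rcases eq_or_ne a j' with rfl | hj1
    · simp only [hτ, Equiv.swap_apply_right, hi', Fin.coe_castLE]; exact i.2
    · rw [hτ, Equiv.swap_apply_of_ne_of_ne hi1 hj1]; exact ha
  have hτge : ∀ a : Fin n, l ≤ (a : ℕ) → τ a = a := by
    intro a ha
    have h1 : a ≠ i' := by
      intro h
      have := i.2
      rw [h, hi'] at ha
      simp only [Fin.coe_castLE] at ha
      omega
    have h2 : a ≠ j' := by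
      intro h
      have := j.2
      rw [h, hj'] at ha
      simp only [Fin.coe_castLE] at ha
      omega
    rw [hτ, Equiv.swap_apply_of_ne_of_ne h1 h2]
  have hτinv : ∀ a : Fin n, τ (τ a) = a := fun a => by
    rw [hτ, Equiv.swap_apply_self]
  -- invariance of the renamed r
  have hr : rename (⇑τ) (rename (Fin.castLE hln) r) = rename (Fin.castLE hln) r := by
    rw [rename_rename]
    have hcomp : (⇑τ ∘ Fin.castLE hln) = (Fin.castLE hln ∘ ⇑(Equiv.swap i j)) := by
      funext a
      simp only [Function.comp_apply]
      rcases eq_or_ne a i with rfl | ha1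
      · simp [hτ, hi', hj']
      rcases eq_or_ne a j with rfl | ha2
      · simp [hτ, hi', hj']
      · have c1 : Fin.castLE hln a ≠ i' := by
          rw [hi']; exact fun h => ha1 (Fin.castLE_injective hln h)
        have c2 : Fin.castLE hln a ≠ j' := by
          rw [hj']; exact fun h => ha2 (Fin.castLE_injective hln h)
        rw [hτ, Equiv.swap_apply_of_ne_of_ne c1 c2,
          Equiv.swap_apply_of_ne_of_ne ha1 ha2]
    rw [hcomp, ← rename_rename, hsym]
  -- invariance of prodPlus
  have hPlus : rename (⇑τ) (prodPlus n l) = prodPlus n l := by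
    unfold prodPlus
    rw [map_prod]
    simp only [map_add, rename_X]
    set s := Finset.univ.filter
      (fun p : Fin n × Fin n => (p.1 : ℕ) < l ∧ p.1 < p.2) with hs
    have hmem : ∀ p : Fin n × Fin n, p ∈ s ↔ (p.1 : ℕ) < l ∧ p.1 < p.2 := by
      intro p; rw [hs, Finset.mem_filter]; simp
    set e : Fin n × Fin n → Fin n × Fin n :=
      fun p => if τ p.1 < τ p.2 then (τ p.1, τ p.2) else (τ p.2, τ p.1) with he
    have hemem : ∀ p ∈ s, e p ∈ s := by
      intro p hp
      rw [hmem] at hp ⊢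
      have hpl := hτl p.1 hp.1
      have hne' : τ p.1 ≠ τ p.2 := fun h => (ne_of_lt hp.2) (τ.injective h)
      rw [he]
      rcases lt_or_gt_of_ne hne' with h | h
      · simp only [if_pos h]
        refine ⟨?_, h⟩
        exact hpl
      · simp only [if_neg (not_lt.mpr (le_of_lt h))]
        refine ⟨?_, h⟩
        have : (τ p.2 : ℕ) < (τ p.1 : ℕ) := h
        omega
    have hinv : ∀ p ∈ s, e (e p) = p := by
      intro p hp
      rw [hmem] at hp
      rw [he]
      by_cases h : τ p.1 < τ p.2
      · simp only [if_pos h, hτinv, if_pos hp.2]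
      · simp only [if_neg h, hτinv, if_neg (not_lt.mpr (le_of_lt hp.2))]
    refine Finset.prod_nbij' e e hemem hemem hinv hinv ?_
    intro p hp
    rw [he]
    by_cases h : τ p.1 < τ p.2
    · simp only [if_pos h]
    · simp only [if_neg h]
      exact add_comm _ _
  -- invariance of prodMinus
  have hMinus : rename (⇑τ) (prodMinus n l) = prodMinus n l := by
    unfold prodMinus
    rw [map_prod]
    apply Finset.prod_congr rfl
    intro p hp
    rw [Finset.mem_filter] at hp
    obtain ⟨-, h1, h2⟩ := hp
    have hp2 : l ≤ (p.2 : ℕ) := le_of_lt (lt_of_le_of_lt h1 h2)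
    rw [map_sub, rename_X, rename_X, hτge p.1 h1, hτge p.2 hp2]
  apply antiSum_eq_zero_of_fix n _ τ (Equiv.Perm.sign_swap hne)
  rw [map_mul, map_mul, hr, hPlus, hMinus]
end

section
/- Let λ be a strict partition with l(λ) ≤ n. Then P*_{λ|n+1}(x_1,...,x_n,0) = P*_{λ|n}(x_1,...,x_n); that is, the polynomials P*_{λ|n} are stable under setting the last variable to zero. -/
open MvPolynomial Finset

/-- `∏_{i=1}^{l} (x_i ↓ λ_i)`, the product of falling factorial powers; here `lam i = 0`
for `i ≥ l`, so those factors are `1`. -/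
noncomputable def fallProd (n : ℕ) (lam : Fin n → ℕ) : MvPolynomial (Fin n) ℚ :=
  ∏ i : Fin n, ∏ k ∈ Finset.range (lam i), (X i - C (k : ℚ))

namespace PstarAux

variable {n : ℕ}

/-- The permutation of `Fin (n+1)` sending `k ↦ last n` and `k.succAbove m ↦ castSucc m`. -/
def cyc (k : Fin (n + 1)) : Equiv.Perm (Fin (n + 1)) :=
  Fin.revPerm.trans ((Fin.rev k).cycleRange.trans Fin.revPerm)

lemma cyc_apply (k x : Fin (n + 1)) :
    cyc k x = Fin.rev ((Fin.rev k).cycleRange (Fin.rev x)) := rfl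

lemma cyc_self (k : Fin (n + 1)) : cyc k k = Fin.last n := by
  simp [cyc_apply]

lemma cyc_succAbove (k : Fin (n + 1)) (m : Fin n) :
    cyc k (k.succAbove m) = Fin.castSucc m := by
  rw [cyc_apply, Fin.rev_succAbove, Fin.cycleRange_succAbove, Fin.rev_succ, Fin.rev_rev]

lemma cyc_last : cyc (Fin.last n) = Equiv.refl _ := by
  ext x
  simp [cyc_apply, Fin.rev_last]

lemma sign_cyc (k : Fin (n + 1)) :
    Equiv.Perm.sign (cyc k) = (-1) ^ (n - (k : ℕ)) := by
  have h : cyc k = Fin.revPerm * (Fin.rev k).cycleRange * Fin.revPerm := by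
    ext x; rfl
  rw [h, map_mul, map_mul, Fin.sign_cycleRange]
  have hv : ((Fin.rev k : Fin (n + 1)) : ℕ) = n - (k : ℕ) := by
    rw [Fin.val_rev]; omega
  rw [hv, mul_comm (Equiv.Perm.sign (Fin.revPerm : Equiv.Perm (Fin (n + 1)))) _,
    mul_assoc, Int.units_mul_self, mul_one]

/-- Extension of a permutation of `Fin n` to `Fin (n+1)` fixing `last n`. -/
def extLast (σ : Equiv.Perm (Fin n)) : Equiv.Perm (Fin (n + 1)) :=
  finSuccEquivLast.symm.permCongr σ.optionCongr

lemma extLast_castSucc (σ : Equiv.Perm (Fin n)) (i : Fin n) :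
    extLast σ (Fin.castSucc i) = Fin.castSucc (σ i) := by
  simp [extLast]

lemma extLast_last (σ : Equiv.Perm (Fin n)) :
    extLast σ (Fin.last n) = Fin.last n := by
  simp [extLast]

lemma sign_extLast (σ : Equiv.Perm (Fin n)) :
    Equiv.Perm.sign (extLast σ) = Equiv.Perm.sign σ := by
  rw [extLast, Equiv.Perm.sign_permCongr, Equiv.optionCongr_sign]

end PstarAux

namespace PstarAux

/-- The substitution corresponding to `x ↦ x_{cyc k}` followed by setting the last variable to 0. -/
noncomputable def gk (k : Fin (n + 1)) : Fin (n + 1) → MvPolynomial (Fin n) ℚ :=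
  fun i => (Fin.snoc X (0 : MvPolynomial (Fin n) ℚ) : Fin (n + 1) → MvPolynomial (Fin n) ℚ) (cyc k i)

lemma gk_self (k : Fin (n + 1)) : gk k k = 0 := by
  simp [gk, cyc_self]

lemma gk_succAbove (k : Fin (n + 1)) (m : Fin n) : gk k (k.succAbove m) = X m := by
  simp [gk, cyc_succAbove]

lemma succAbove_val (k : Fin (n + 1)) (m : Fin n) :
    ((k.succAbove m : Fin (n + 1)) : ℕ) =
      if (m : ℕ) < (k : ℕ) then (m : ℕ) else (m : ℕ) + 1 := by
  rcases lt_or_ge ((m : ℕ)) ((k : ℕ)) with h | h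
  · rw [Fin.succAbove_of_castSucc_lt _ _ (by simp [Fin.lt_def, h]), if_pos h, Fin.coe_castSucc]
  · rw [Fin.succAbove_of_le_castSucc _ _ (by simp [Fin.le_def, h]), if_neg (not_lt.mpr h),
      Fin.val_succ]

lemma prod_pairs {N : ℕ} {M : Type*} [CommMonoid M] (Q : Fin N → Fin N → Prop)
    [∀ i j, Decidable (Q i j)] (F : Fin N → Fin N → M) :
    ∏ p ∈ Finset.univ.filter (fun p : Fin N × Fin N => Q p.1 p.2), F p.1 p.2
      = ∏ i : Fin N, ∏ j : Fin N, if Q i j then F i j else 1 := by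
  rw [Finset.prod_filter, ← Finset.univ_product_univ, Finset.prod_product]

lemma prod_split {M : Type*} [CommMonoid M] (k : Fin (n + 1)) (H : Fin (n + 1) → Fin (n + 1) → M) :
    (∏ i : Fin (n + 1), ∏ j : Fin (n + 1), H i j)
      = (H k k * ∏ j' : Fin n, H k (k.succAbove j')) *
        ((∏ i' : Fin n, H (k.succAbove i') k) *
          ∏ i' : Fin n, ∏ j' : Fin n, H (k.succAbove i') (k.succAbove j')) := by
  rw [Fin.prod_univ_succAbove (fun i => ∏ j, H i j) k]
  congr 1
  · exact Fin.prod_univ_succAbove (H k) k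
  · rw [← Finset.prod_mul_distrib]
    exact Finset.prod_congr rfl fun i' _ => Fin.prod_univ_succAbove (H (k.succAbove i')) k

lemma card_filter_ge (N a : ℕ) :
    (Finset.univ.filter (fun i : Fin N => a ≤ (i : ℕ))).card = N - a := by
  rw [Finset.card_filter]
  rw [Fin.sum_univ_eq_sum_range (fun j => if a ≤ j then 1 else 0)]
  rw [← Finset.card_filter]
  have h : (Finset.range N).filter (fun j => a ≤ j) = Finset.Ico a N := by
    ext x
    simp only [Finset.mem_filter, Finset.mem_range, Finset.mem_Ico]
    omega
  rw [h, Nat.card_Ico]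

lemma monomials {l : ℕ} {k : Fin (n + 1)} (hk : l ≤ (k : ℕ)) :
    (∏ i' : Fin n, if (i' : ℕ) < l then X i' else 1) *
      ((∏ i' : Fin n, if l ≤ (i' : ℕ) ∧ (i' : ℕ) < (k : ℕ) then X i' else 1) *
        (∏ i' : Fin n, if (k : ℕ) ≤ (i' : ℕ) then -X i' else (1 : MvPolynomial (Fin n) ℚ))) =
      C ((-1 : ℚ) ^ (n - (k : ℕ))) * ∏ i' : Fin n, X i' := by
  rw [← Finset.prod_mul_distrib, ← Finset.prod_mul_distrib]
  have h1 : ∀ i' : Fin n,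
      (if (i' : ℕ) < l then X i' else 1) *
        ((if l ≤ (i' : ℕ) ∧ (i' : ℕ) < (k : ℕ) then X i' else 1) *
          (if (k : ℕ) ≤ (i' : ℕ) then -X i' else (1 : MvPolynomial (Fin n) ℚ)))
      = (if (k : ℕ) ≤ (i' : ℕ) then (-1 : MvPolynomial (Fin n) ℚ) else 1) * X i' := by
    intro i'
    split_ifs <;> first | (exfalso; omega) | ring
  rw [Finset.prod_congr rfl fun i' _ => h1 i', Finset.prod_mul_distrib]
  congr 1
  rw [Finset.prod_ite, Finset.prod_const, Finset.prod_const_one, mul_one, card_filter_ge]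
  rw [map_pow, map_neg, map_one]

end PstarAux

namespace PstarAux

variable {l : ℕ} {k : Fin (n + 1)}

lemma aeval_gk_prodPlus (hk : l ≤ (k : ℕ)) :
    aeval (gk k) (prodPlus (n + 1) l) =
      (∏ i' : Fin n, if (i' : ℕ) < l then X i' else 1) * prodPlus n l := by
  have hkl : ¬((k : ℕ) < l) := not_lt.mpr hk
  have step1 : aeval (gk k) (prodPlus (n + 1) l)
      = ∏ i : Fin (n + 1), ∏ j : Fin (n + 1),
          if (i : ℕ) < l ∧ i < j then gk k i + gk k j else 1 := by
    rw [prodPlus, map_prod]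
    rw [show (∏ p ∈ Finset.univ.filter
          (fun p : Fin (n + 1) × Fin (n + 1) => (p.1 : ℕ) < l ∧ p.1 < p.2),
          aeval (gk k) (X p.1 + X p.2))
        = ∏ p ∈ Finset.univ.filter
          (fun p : Fin (n + 1) × Fin (n + 1) => (p.1 : ℕ) < l ∧ p.1 < p.2),
          (gk k p.1 + gk k p.2) from
      Finset.prod_congr rfl fun p _ => by rw [map_add, aeval_X, aeval_X]]
    exact prod_pairs (fun i j => (i : ℕ) < l ∧ i < j) (fun i j => gk k i + gk k j)
  rw [step1]
  have hB11 : (if (k : ℕ) < l ∧ k < k then gk k k + gk k k else 1) = 1 :=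
    if_neg fun h => hkl h.1
  have hB12 : (∏ j' : Fin n,
      if (k : ℕ) < l ∧ k < k.succAbove j' then gk k k + gk k (k.succAbove j') else 1) = 1 :=
    Finset.prod_eq_one fun j' _ => if_neg fun h => hkl h.1
  have hB21 : (∏ i' : Fin n,
      if ((k.succAbove i' : Fin (n + 1)) : ℕ) < l ∧ k.succAbove i' < k then
        gk k (k.succAbove i') + gk k k else 1)
      = ∏ i' : Fin n, if (i' : ℕ) < l then X i' else 1 := by
    refine Finset.prod_congr rfl fun i' _ => ?_
    have hc : (((k.succAbove i' : Fin (n + 1)) : ℕ) < l ∧ k.succAbove i' < k) ↔ (i' : ℕ) < l := by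
      simp only [Fin.lt_def, succAbove_val]
      split_ifs <;> omega
    rw [gk_succAbove, gk_self, add_zero]
    exact if_congr hc rfl rfl
  have hB22 : (∏ i' : Fin n, ∏ j' : Fin n,
      if ((k.succAbove i' : Fin (n + 1)) : ℕ) < l ∧ k.succAbove i' < k.succAbove j' then
        gk k (k.succAbove i') + gk k (k.succAbove j') else 1) = prodPlus n l := by
    have h2 : prodPlus n l
        = ∏ i' : Fin n, ∏ j' : Fin n, if (i' : ℕ) < l ∧ i' < j' then X i' + X j' else 1 := by
      rw [prodPlus]; exact prod_pairs (fun i j => (i : ℕ) < l ∧ i < j) (fun i j => X i + X j)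
    rw [h2]
    refine Finset.prod_congr rfl fun i' _ => Finset.prod_congr rfl fun j' _ => ?_
    have hc : (((k.succAbove i' : Fin (n + 1)) : ℕ) < l ∧ k.succAbove i' < k.succAbove j')
        ↔ ((i' : ℕ) < l ∧ i' < j') := by
      simp only [Fin.lt_def, succAbove_val]
      split_ifs <;> omega
    rw [gk_succAbove, gk_succAbove]
    exact if_congr hc rfl rfl
  calc (∏ i : Fin (n + 1), ∏ j : Fin (n + 1),
          if (i : ℕ) < l ∧ i < j then gk k i + gk k j else 1)
      = ((if (k : ℕ) < l ∧ k < k then gk k k + gk k k else 1) *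
          ∏ j' : Fin n,
            if (k : ℕ) < l ∧ k < k.succAbove j' then gk k k + gk k (k.succAbove j') else 1) *
        ((∏ i' : Fin n,
            if ((k.succAbove i' : Fin (n + 1)) : ℕ) < l ∧ k.succAbove i' < k then
              gk k (k.succAbove i') + gk k k else 1) *
          ∏ i' : Fin n, ∏ j' : Fin n,
            if ((k.succAbove i' : Fin (n + 1)) : ℕ) < l ∧ k.succAbove i' < k.succAbove j' then
              gk k (k.succAbove i') + gk k (k.succAbove j') else 1) := prod_split k _
    _ = (∏ i' : Fin n, if (i' : ℕ) < l then X i' else 1) * prodPlus n l := by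
        rw [hB11, hB12, hB21, hB22, one_mul, one_mul]

lemma aeval_gk_prodMinus (hk : l ≤ (k : ℕ)) :
    aeval (gk k) (prodMinus (n + 1) l) =
      (∏ j' : Fin n, if (k : ℕ) ≤ (j' : ℕ) then -X j' else 1) *
        ((∏ i' : Fin n, if l ≤ (i' : ℕ) ∧ (i' : ℕ) < (k : ℕ) then X i' else 1) *
          prodMinus n l) := by
  have step1 : aeval (gk k) (prodMinus (n + 1) l)
      = ∏ i : Fin (n + 1), ∏ j : Fin (n + 1),
          if l ≤ (i : ℕ) ∧ i < j then gk k i - gk k j else 1 := by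
    rw [prodMinus, map_prod]
    rw [show (∏ p ∈ Finset.univ.filter
          (fun p : Fin (n + 1) × Fin (n + 1) => l ≤ (p.1 : ℕ) ∧ p.1 < p.2),
          aeval (gk k) (X p.1 - X p.2))
        = ∏ p ∈ Finset.univ.filter
          (fun p : Fin (n + 1) × Fin (n + 1) => l ≤ (p.1 : ℕ) ∧ p.1 < p.2),
          (gk k p.1 - gk k p.2) from
      Finset.prod_congr rfl fun p _ => by rw [map_sub, aeval_X, aeval_X]]
    exact prod_pairs (fun i j => l ≤ (i : ℕ) ∧ i < j) (fun i j => gk k i - gk k j)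
  rw [step1]
  have hB11 : (if l ≤ (k : ℕ) ∧ k < k then gk k k - gk k k else 1) = 1 :=
    if_neg fun h => lt_irrefl _ h.2
  have hB12 : (∏ j' : Fin n,
      if l ≤ (k : ℕ) ∧ k < k.succAbove j' then gk k k - gk k (k.succAbove j') else 1)
      = ∏ j' : Fin n, if (k : ℕ) ≤ (j' : ℕ) then -X j' else 1 := by
    refine Finset.prod_congr rfl fun j' _ => ?_
    have hc : (l ≤ (k : ℕ) ∧ k < k.succAbove j') ↔ (k : ℕ) ≤ (j' : ℕ) := by
      simp only [Fin.lt_def, succAbove_val]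
      split_ifs <;> omega
    rw [gk_self, gk_succAbove, zero_sub]
    exact if_congr hc rfl rfl
  have hB21 : (∏ i' : Fin n,
      if l ≤ ((k.succAbove i' : Fin (n + 1)) : ℕ) ∧ k.succAbove i' < k then
        gk k (k.succAbove i') - gk k k else 1)
      = ∏ i' : Fin n, if l ≤ (i' : ℕ) ∧ (i' : ℕ) < (k : ℕ) then X i' else 1 := by
    refine Finset.prod_congr rfl fun i' _ => ?_
    have hc : (l ≤ ((k.succAbove i' : Fin (n + 1)) : ℕ) ∧ k.succAbove i' < k)
        ↔ (l ≤ (i' : ℕ) ∧ (i' : ℕ) < (k : ℕ)) := by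
      simp only [Fin.lt_def, succAbove_val]
      split_ifs <;> omega
    rw [gk_succAbove, gk_self, sub_zero]
    exact if_congr hc rfl rfl
  have hB22 : (∏ i' : Fin n, ∏ j' : Fin n,
      if l ≤ ((k.succAbove i' : Fin (n + 1)) : ℕ) ∧ k.succAbove i' < k.succAbove j' then
        gk k (k.succAbove i') - gk k (k.succAbove j') else 1) = prodMinus n l := by
    have h2 : prodMinus n l
        = ∏ i' : Fin n, ∏ j' : Fin n, if l ≤ (i' : ℕ) ∧ i' < j' then X i' - X j' else 1 := by
      rw [prodMinus]; exact prod_pairs (fun i j => l ≤ (i : ℕ) ∧ i < j) (fun i j => X i - X j)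
    rw [h2]
    refine Finset.prod_congr rfl fun i' _ => Finset.prod_congr rfl fun j' _ => ?_
    have hc : (l ≤ ((k.succAbove i' : Fin (n + 1)) : ℕ) ∧ k.succAbove i' < k.succAbove j')
        ↔ (l ≤ (i' : ℕ) ∧ i' < j') := by
      simp only [Fin.lt_def, succAbove_val]
      split_ifs <;> omega
    rw [gk_succAbove, gk_succAbove]
    exact if_congr hc rfl rfl
  calc (∏ i : Fin (n + 1), ∏ j : Fin (n + 1),
          if l ≤ (i : ℕ) ∧ i < j then gk k i - gk k j else 1)
      = ((if l ≤ (k : ℕ) ∧ k < k then gk k k - gk k k else 1) *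
          ∏ j' : Fin n,
            if l ≤ (k : ℕ) ∧ k < k.succAbove j' then gk k k - gk k (k.succAbove j') else 1) *
        ((∏ i' : Fin n,
            if l ≤ ((k.succAbove i' : Fin (n + 1)) : ℕ) ∧ k.succAbove i' < k then
              gk k (k.succAbove i') - gk k k else 1) *
          ∏ i' : Fin n, ∏ j' : Fin n,
            if l ≤ ((k.succAbove i' : Fin (n + 1)) : ℕ) ∧ k.succAbove i' < k.succAbove j' then
              gk k (k.succAbove i') - gk k (k.succAbove j') else 1) := prod_split k _
    _ = _ := by rw [hB11, hB12, hB21, hB22, one_mul]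

lemma aeval_gk_fallProd (lam : Fin n → ℕ)
    (hlam0 : ∀ i : Fin n, l ≤ (i : ℕ) → lam i = 0) (hk : l ≤ (k : ℕ)) :
    aeval (gk k) (fallProd (n + 1) (Fin.snoc lam 0)) = fallProd n lam := by
  have hsnoc0 : ∀ j : Fin (n + 1), l ≤ (j : ℕ) → (Fin.snoc lam 0 : Fin (n + 1) → ℕ) j = 0 := by
    intro j hj
    induction j using Fin.lastCases with
    | last => exact Fin.snoc_last _ _
    | cast i =>
        rw [Fin.snoc_castSucc]
        exact hlam0 i (by simpa using hj)
  have hsA : ∀ m : Fin n, (Fin.snoc lam 0 : Fin (n + 1) → ℕ) (k.succAbove m) = lam m := by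
    intro m
    rcases lt_or_ge ((m : ℕ)) ((k : ℕ)) with h | h
    · rw [Fin.succAbove_of_castSucc_lt _ _ (by simp [Fin.lt_def, h]), Fin.snoc_castSucc]
    · rw [hsnoc0 _ (by rw [succAbove_val]; split_ifs <;> omega)]
      exact (hlam0 m (hk.trans h)).symm
  have step1 : aeval (gk k) (fallProd (n + 1) (Fin.snoc lam 0))
      = ∏ i : Fin (n + 1), ∏ t ∈ Finset.range ((Fin.snoc lam 0 : Fin (n + 1) → ℕ) i),
          (gk k i - C (t : ℚ)) := by
    rw [fallProd, map_prod]
    refine Finset.prod_congr rfl fun i _ => ?_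
    rw [map_prod]
    refine Finset.prod_congr rfl fun t _ => ?_
    rw [map_sub, aeval_X, aeval_C, MvPolynomial.algebraMap_eq]
  rw [step1]
  calc (∏ i : Fin (n + 1), ∏ t ∈ Finset.range ((Fin.snoc lam 0 : Fin (n + 1) → ℕ) i),
          (gk k i - C (t : ℚ)))
      = (∏ t ∈ Finset.range ((Fin.snoc lam 0 : Fin (n + 1) → ℕ) k), (gk k k - C (t : ℚ))) *
        ∏ m : Fin n, ∏ t ∈ Finset.range ((Fin.snoc lam 0 : Fin (n + 1) → ℕ) (k.succAbove m)),
          (gk k (k.succAbove m) - C (t : ℚ)) := Fin.prod_univ_succAbove _ k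
    _ = fallProd n lam := by
        rw [hsnoc0 k hk, Finset.range_zero, Finset.prod_empty, one_mul, fallProd]
        refine Finset.prod_congr rfl fun m _ => ?_
        rw [hsA m, gk_succAbove]

lemma aeval_gk_A (lam : Fin n → ℕ)
    (hlam0 : ∀ i : Fin n, l ≤ (i : ℕ) → lam i = 0) (hk : l ≤ (k : ℕ)) :
    aeval (gk k) (fallProd (n + 1) (Fin.snoc lam 0) * prodPlus (n + 1) l * prodMinus (n + 1) l)
      = C ((-1 : ℚ) ^ (n - (k : ℕ))) *
        ((∏ i : Fin n, X i) * (fallProd n lam * prodPlus n l * prodMinus n l)) := by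
  rw [map_mul, map_mul, aeval_gk_fallProd lam hlam0 hk, aeval_gk_prodPlus hk,
    aeval_gk_prodMinus hk]
  have hmono := monomials (n := n) hk
  linear_combination (fallProd n lam * prodPlus n l * prodMinus n l) * hmono

lemma aeval_gk_zero (lam : Fin n → ℕ)
    (hlampos : ∀ i : Fin n, (i : ℕ) < l → 0 < lam i) (hln : l ≤ n) (hk : (k : ℕ) < l) :
    aeval (gk k) (fallProd (n + 1) (Fin.snoc lam 0) * prodPlus (n + 1) l * prodMinus (n + 1) l)
      = 0 := by
  rw [map_mul, map_mul]
  have h0 : aeval (gk k) (fallProd (n + 1) (Fin.snoc lam 0)) = 0 := by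
    rw [fallProd, map_prod]
    apply Finset.prod_eq_zero (Finset.mem_univ k)
    show aeval (gk k) (∏ t ∈ Finset.range ((Fin.snoc lam 0 : Fin (n + 1) → ℕ) k),
      (X k - C (t : ℚ))) = 0
    rw [map_prod]
    apply Finset.prod_eq_zero (i := 0)
    · rw [Finset.mem_range]
      have hkn : (k : ℕ) < n := lt_of_lt_of_le hk hln
      have hcast : k = Fin.castSucc ⟨(k : ℕ), hkn⟩ := by ext; rfl
      rw [hcast, Fin.snoc_castSucc]
      exact hlampos _ hk
    · show aeval (gk k) (X k - C ((0 : ℕ) : ℚ)) = 0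
      rw [map_sub, aeval_X, gk_self]
      simp
  rw [h0, zero_mul, zero_mul]

end PstarAux

namespace PstarAux

variable {l : ℕ}

lemma phi_rename_cyc (k : Fin (n + 1)) (p : MvPolynomial (Fin (n + 1)) ℚ) :
    aeval (Fin.snoc X (0 : MvPolynomial (Fin n) ℚ)) (rename (⇑(cyc k)) p) = aeval (gk k) p := by
  rw [aeval_rename]
  rfl

lemma phi_rename_ext (σ : Equiv.Perm (Fin n)) (p : MvPolynomial (Fin (n + 1)) ℚ) :
    aeval (Fin.snoc X (0 : MvPolynomial (Fin n) ℚ)) (rename (⇑(extLast σ)) p)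
      = rename (⇑σ) (aeval (Fin.snoc X (0 : MvPolynomial (Fin n) ℚ)) p) := by
  rw [aeval_rename]
  have hfun : (Fin.snoc X (0 : MvPolynomial (Fin n) ℚ) : Fin (n + 1) → MvPolynomial (Fin n) ℚ)
        ∘ ⇑(extLast σ)
      = fun j => rename (⇑σ)
          ((Fin.snoc X (0 : MvPolynomial (Fin n) ℚ) : Fin (n + 1) → MvPolynomial (Fin n) ℚ) j) := by
    funext j
    induction j using Fin.lastCases with
    | last => simp [extLast_last]
    | cast i => simp [extLast_castSucc]
  rw [hfun]
  exact (comp_aeval_apply _ (rename (⇑σ)) p).symm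

lemma ext_cyc_bijective :
    Function.Bijective
      (fun p : Fin (n + 1) × Equiv.Perm (Fin n) => extLast p.2 * cyc p.1) := by
  rw [Fintype.bijective_iff_injective_and_card]
  constructor
  · rintro ⟨k, σ⟩ ⟨k', σ'⟩ h
    simp only at h
    have hk : k = k' := by
      have h1 : (extLast σ * cyc k) k = Fin.last n := by
        rw [Equiv.Perm.mul_apply, cyc_self, extLast_last]
      have h2 : extLast σ' (cyc k' k) = Fin.last n := by
        rw [← Equiv.Perm.mul_apply, ← h]
        exact h1
      have h3 : cyc k' k = Fin.last n :=
        (extLast σ').injective (h2.trans (extLast_last σ').symm)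
      have h4 : cyc k' k = cyc k' k' := by rw [h3, cyc_self]
      exact (cyc k').injective h4
    subst hk
    have hmul : extLast σ = extLast σ' := mul_right_cancel h
    have hσ : σ = σ' := by
      ext i
      have h5 := congrArg (fun e : Equiv.Perm (Fin (n + 1)) => e (Fin.castSucc i)) hmul
      simp only [extLast_castSucc] at h5
      exact congrArg Fin.val (Fin.castSucc_injective n h5)
    rw [hσ]
  · simp [Fintype.card_perm, Nat.factorial_succ]

lemma phi_antiSum (hln : l ≤ n) (lam : Fin n → ℕ)
    (hlam0 : ∀ i : Fin n, l ≤ (i : ℕ) → lam i = 0)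
    (hlampos : ∀ i : Fin n, (i : ℕ) < l → 0 < lam i) :
    aeval (Fin.snoc X (0 : MvPolynomial (Fin n) ℚ))
        (antiSum (n + 1)
          (fallProd (n + 1) (Fin.snoc lam 0) * prodPlus (n + 1) l * prodMinus (n + 1) l))
      = ((n + 1 - l : ℕ) : ℚ) • ((∏ i : Fin n, X i) *
          antiSum n (fallProd n lam * prodPlus n l * prodMinus n l)) := by
  classical
  rw [antiSum, map_sum]
  rw [← Fintype.sum_bijective _ ext_cyc_bijective
      (fun p : Fin (n + 1) × Equiv.Perm (Fin n) =>
        aeval (Fin.snoc X (0 : MvPolynomial (Fin n) ℚ))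
          (((Equiv.Perm.sign (extLast p.2 * cyc p.1) : ℤ) : ℚ) •
            rename (⇑(extLast p.2 * cyc p.1))
              (fallProd (n + 1) (Fin.snoc lam 0) * prodPlus (n + 1) l * prodMinus (n + 1) l)))
      (fun ω =>
        aeval (Fin.snoc X (0 : MvPolynomial (Fin n) ℚ))
          (((Equiv.Perm.sign ω : ℤ) : ℚ) •
            rename (⇑ω)
              (fallProd (n + 1) (Fin.snoc lam 0) * prodPlus (n + 1) l * prodMinus (n + 1) l)))
      (fun p => rfl)]
  rw [Fintype.sum_prod_type]
  have hterm : ∀ (k : Fin (n + 1)) (σ : Equiv.Perm (Fin n)),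
      aeval (Fin.snoc X (0 : MvPolynomial (Fin n) ℚ))
          (((Equiv.Perm.sign (extLast σ * cyc k) : ℤ) : ℚ) •
            rename (⇑(extLast σ * cyc k))
              (fallProd (n + 1) (Fin.snoc lam 0) * prodPlus (n + 1) l * prodMinus (n + 1) l))
        = if l ≤ (k : ℕ) then
            ((Equiv.Perm.sign σ : ℤ) : ℚ) • ((∏ i : Fin n, X i) *
              rename (⇑σ) (fallProd n lam * prodPlus n l * prodMinus n l))
          else 0 := by
    intro k σ
    rw [map_smul]
    have hco : (⇑(extLast σ * cyc k) : Fin (n + 1) → Fin (n + 1))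
        = ⇑(extLast σ) ∘ ⇑(cyc k) := rfl
    rw [hco, ← MvPolynomial.rename_rename, phi_rename_ext, phi_rename_cyc]
    by_cases hk : l ≤ (k : ℕ)
    · rw [if_pos hk, aeval_gk_A lam hlam0 hk]
      have hprodX : rename (⇑σ) (∏ i : Fin n, (X i : MvPolynomial (Fin n) ℚ))
          = ∏ i : Fin n, (X i : MvPolynomial (Fin n) ℚ) := by
        rw [map_prod]
        rw [Finset.prod_congr rfl fun i _ => (rename_X (⇑σ) i : _)]
        exact Equiv.prod_comp σ _
      have hren : rename (⇑σ) (C ((-1 : ℚ) ^ (n - (k : ℕ))) *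
            ((∏ i : Fin n, X i) * (fallProd n lam * prodPlus n l * prodMinus n l)))
          = C ((-1 : ℚ) ^ (n - (k : ℕ))) * ((∏ i : Fin n, X i) *
              rename (⇑σ) (fallProd n lam * prodPlus n l * prodMinus n l)) := by
        rw [map_mul, map_mul, MvPolynomial.rename_C, hprodX]
      rw [hren]
      rw [MvPolynomial.smul_eq_C_mul, MvPolynomial.smul_eq_C_mul]
      rw [← mul_assoc, ← map_mul]
      have hsgn : ((Equiv.Perm.sign (extLast σ * cyc k) : ℤ) : ℚ) * (-1 : ℚ) ^ (n - (k : ℕ))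
          = ((Equiv.Perm.sign σ : ℤ) : ℚ) := by
        rw [map_mul, sign_extLast, sign_cyc]
        push_cast
        rw [mul_assoc, ← mul_pow]
        norm_num
      rw [hsgn]
    · rw [if_neg hk, aeval_gk_zero lam hlampos hln (not_le.mp hk), map_zero, smul_zero]
  simp only [hterm]
  have hsum1 : ∀ k : Fin (n + 1),
      (∑ σ : Equiv.Perm (Fin n), if l ≤ (k : ℕ) then
          ((Equiv.Perm.sign σ : ℤ) : ℚ) • ((∏ i : Fin n, X i) *
            rename (⇑σ) (fallProd n lam * prodPlus n l * prodMinus n l))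
        else 0)
      = if l ≤ (k : ℕ) then
          (∏ i : Fin n, X i) * antiSum n (fallProd n lam * prodPlus n l * prodMinus n l)
        else 0 := by
    intro k
    split_ifs with h
    · rw [antiSum, Finset.mul_sum]
      exact Finset.sum_congr rfl fun σ _ => (mul_smul_comm _ _ _).symm
    · exact Finset.sum_const_zero
  rw [Finset.sum_congr rfl fun k _ => hsum1 k]
  rw [← Finset.sum_filter, Finset.sum_const, card_filter_ge]
  rw [← Nat.cast_smul_eq_nsmul ℚ]

end PstarAux

/-- stability of the polynomials `P*_{λ|m}`:
`P*_{λ|n+1}(x_1, …, x_n, 0) = P*_{λ|n}(x_1, …, x_n)`. The strict partition `λ` with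
`l(λ) = l ≤ n` is encoded as `lam : Fin n → ℕ`, strictly decreasing and positive on the
first `l` coordinates and zero on the rest; it is extended to `Fin (n+1)` by `0`. -/
theorem Pstar_stability
    (n l : ℕ) (hln : l ≤ n) (lam : Fin n → ℕ)
    (hpos : ∀ i : Fin n, 0 < lam i ↔ (i : ℕ) < l)
    (hdec : ∀ i j : Fin n, i < j → (j : ℕ) < l → lam j < lam i)
    (Pn : MvPolynomial (Fin n) ℚ) (Pn1 : MvPolynomial (Fin (n + 1)) ℚ)
    (hPn : (Nat.factorial (n - l) : ℚ) • (vand n * Pn) =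
      antiSum n (fallProd n lam * prodPlus n l * prodMinus n l))
    (hPn1 : (Nat.factorial (n + 1 - l) : ℚ) • (vand (n + 1) * Pn1) =
      antiSum (n + 1) (fallProd (n + 1) (Fin.snoc lam 0) *
        prodPlus (n + 1) l * prodMinus (n + 1) l)) :
    aeval (Fin.snoc X (0 : MvPolynomial (Fin n) ℚ)) Pn1 = Pn := by
  classical
  open PstarAux in
  have hlam0 : ∀ i : Fin n, l ≤ (i : ℕ) → lam i = 0 := by
    intro i hi
    by_contra h
    exact absurd ((hpos i).mp (Nat.pos_of_ne_zero h)) (not_lt.mpr hi)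
  have hlampos : ∀ i : Fin n, (i : ℕ) < l → 0 < lam i := fun i hi => (hpos i).mpr hi
  -- evaluation of the Vandermonde polynomial
  have h00 : (Fin.snoc (fun _ : Fin n => (0 : ℕ)) 0 : Fin (n + 1) → ℕ) = fun _ => 0 := by
    funext j
    induction j using Fin.lastCases with
    | last => exact Fin.snoc_last _ _
    | cast i => exact Fin.snoc_castSucc _ _ _
  have hfall0 : ∀ N : ℕ, fallProd N (fun _ => 0) = 1 := by
    intro N; rw [fallProd]; simp
  have hplus0 : ∀ N : ℕ, prodPlus N 0 = 1 := by
    intro N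
    rw [prodPlus]
    refine Finset.prod_eq_one fun p hp => ?_
    rw [Finset.mem_filter] at hp
    exact absurd hp.2.1 (Nat.not_lt_zero _)
  have hminus0 : ∀ N : ℕ, prodMinus N 0 = vand N := by
    intro N
    rw [prodMinus, vand]
    refine Finset.prod_congr ?_ fun _ _ => rfl
    refine Finset.filter_congr fun p _ => ?_
    simp
  have hgk : gk (Fin.last n) = (Fin.snoc X (0 : MvPolynomial (Fin n) ℚ) :
      Fin (n + 1) → MvPolynomial (Fin n) ℚ) := by
    funext i
    simp [gk, cyc_last]
  have hvand : aeval (Fin.snoc X (0 : MvPolynomial (Fin n) ℚ)) (vand (n + 1))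
      = (∏ i : Fin n, X i) * vand n := by
    have h := aeval_gk_A (l := 0) (k := Fin.last n) (fun _ : Fin n => (0 : ℕ))
      (fun _ _ => rfl) (Nat.zero_le _)
    simp only [h00, hfall0, hplus0, hminus0, hgk, Fin.val_last, Nat.sub_self, pow_zero,
      map_one, one_mul] at h
    exact h
  -- apply the evaluation to the defining identity in n+1 variables
  have E := congrArg (aeval (Fin.snoc X (0 : MvPolynomial (Fin n) ℚ))) hPn1
  rw [map_smul, map_mul, hvand, phi_antiSum hln lam hlam0 hlampos, ← hPn] at E
  rw [mul_smul_comm, smul_smul] at E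
  have hcast : ((n + 1 - l : ℕ) : ℚ) * ((n - l).factorial : ℚ)
      = ((n + 1 - l).factorial : ℚ) := by
    have h1 : n + 1 - l = (n - l) + 1 := by omega
    rw [h1, Nat.factorial_succ]
    push_cast
    ring
  rw [hcast] at E
  have ha : ((n + 1 - l).factorial : ℚ) ≠ 0 := Nat.cast_ne_zero.mpr (Nat.factorial_ne_zero _)
  have E2 : (∏ i : Fin n, X i) * vand n * aeval (Fin.snoc X (0 : MvPolynomial (Fin n) ℚ)) Pn1
      = (∏ i : Fin n, X i) * (vand n * Pn) := by
    have h := congrArg (fun x : MvPolynomial (Fin n) ℚ =>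
      (((n + 1 - l).factorial : ℚ))⁻¹ • x) E
    simpa [smul_smul, inv_mul_cancel₀ ha] using h
  have hX : (∏ i : Fin n, (X i : MvPolynomial (Fin n) ℚ)) ≠ 0 :=
    Finset.prod_ne_zero_iff.mpr fun i _ => MvPolynomial.X_ne_zero i
  have hV : vand n ≠ 0 := by
    rw [vand, Finset.prod_ne_zero_iff]
    intro p hp
    rw [Finset.mem_filter] at hp
    exact sub_ne_zero.mpr fun hxy => absurd (MvPolynomial.X_injective hxy) (ne_of_lt hp.2)
  apply mul_left_cancel₀ (mul_ne_zero hX hV)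
  exact E2.trans (mul_assoc _ _ _).symm
end

section
/- Let μ, λ be strict partitions with l(μ) ≤ l(λ). If μ is not contained in λ, i.e., λ_k < μ_k for some k ≤ l(μ), then P*_μ(λ) = 0. -/
open Finset

/-- The falling factorial `(x ↓ k) = x (x-1) ⋯ (x-k+1)`, with `(x ↓ 0) = 1`. -/
def fallQ (x : ℚ) (k : ℕ) : ℚ := ∏ i ∈ Finset.range k, (x - i)

/-- `μ : ℕ → ℕ` (1-indexed: the parts are `μ 1, μ 2, …`) is a strict partition of
length `l`: its first `l` parts are positive and strictly decreasing, and the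
remaining parts are zero. -/
def IsStrictOfLen (l : ℕ) (μ : ℕ → ℕ) : Prop :=
  (∀ i, 1 ≤ i → i ≤ l → 0 < μ i) ∧
  (∀ i j, 1 ≤ i → i < j → j ≤ l → μ j < μ i) ∧
  (∀ i, l < i → μ i = 0)

/-- The rational number `P*_μ(λ)` for strict partitions `μ` (of length `l`) and `λ`
(of length `n ≥ l`), both 1-indexed and extended by zeroes:
`P*_μ(λ) = (1/(n-l)!) ∑_{ω ∈ S(n)} ∏_{i=1}^{l} (λ_{ω(i)} ↓ μ_i) ·
∏_{1 ≤ i ≤ l, i < j ≤ n} (λ_{ω(i)} + λ_{ω(j)})/(λ_{ω(i)} - λ_{ω(j)})`. -/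
noncomputable def PstarEval (n l : ℕ) (μ lam : ℕ → ℕ) : ℚ :=
  (Nat.factorial (n - l) : ℚ)⁻¹ *
    ∑ ω : Equiv.Perm (Fin n),
      (∏ i : Fin n, fallQ (lam ((ω i : ℕ) + 1) : ℚ) (μ ((i : ℕ) + 1))) *
        ∏ p ∈ Finset.univ.filter (fun p : Fin n × Fin n => (p.1 : ℕ) < l ∧ p.1 < p.2),
          (((lam ((ω p.1 : ℕ) + 1) : ℚ) + (lam ((ω p.2 : ℕ) + 1) : ℚ)) /
            ((lam ((ω p.1 : ℕ) + 1) : ℚ) - (lam ((ω p.2 : ℕ) + 1) : ℚ)))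

lemma fallQ_nat_eq_zero {m k : ℕ} (h : m < k) : fallQ (m : ℚ) k = 0 := by
  apply Finset.prod_eq_zero (Finset.mem_range.mpr h)
  simp

/-- vanishing property: if `μ ⊄ λ`, i.e. `λ_k < μ_k` for some
`k ≤ lmu(μ)`, then `P*_μ(λ) = 0`. -/
theorem PstarEval_eq_zero_of_not_subset
    (n lmu : ℕ) (hln : lmu ≤ n) (μ lam : ℕ → ℕ)
    (hμ : IsStrictOfLen lmu μ) (hlam : IsStrictOfLen n lam)
    (k : ℕ) (hk1 : 1 ≤ k) (hk2 : k ≤ lmu) (hkk : lam k < μ k) :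
    PstarEval n lmu μ lam = 0 := by
  have hkn : k ≤ n := hk2.trans hln
  unfold PstarEval
  rw [Finset.sum_eq_zero, mul_zero]
  intro ω _
  have key : ∃ i : Fin n, (i : ℕ) + 1 ≤ k ∧ lam ((ω i : ℕ) + 1) < μ ((i : ℕ) + 1) := by
    by_contra hcon
    push_neg at hcon
    -- hcon : ∀ i, i+1 ≤ k → μ (i+1) ≤ lam (ω i + 1)
    have hSn : ∀ m ∈ Finset.range k, m < n := fun m hm => by
      have := Finset.mem_range.mp hm; omega
    set S : Finset (Fin n) :=
      (Finset.range k).attach.image (fun m => (⟨m.1, hSn m.1 m.2⟩ : Fin n)) with hS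
    have hcardS : S.card = k := by
      rw [hS, Finset.card_image_of_injective _ (fun a b hab =>
        Subtype.ext (by simpa using congrArg Fin.val hab))]
      simp
    have hTn : ∀ m ∈ Finset.range (k - 1), m < n := fun m hm => by
      have := Finset.mem_range.mp hm; omega
    set T : Finset (Fin n) :=
      (Finset.range (k - 1)).attach.image (fun m => (⟨m.1, hTn m.1 m.2⟩ : Fin n)) with hT
    have hcardT : T.card ≤ k - 1 := by
      rw [hT]
      calc _ ≤ (Finset.range (k-1)).attach.card := Finset.card_image_le
        _ = k - 1 := by simp
    have hmaps : ∀ i ∈ S, ω i ∈ T := by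
      intro i hi
      rw [hS, Finset.mem_image] at hi
      obtain ⟨m, hm, rfl⟩ := hi
      have hmk : (m : ℕ) < k := Finset.mem_range.mp m.2
      have h1 : μ ((m : ℕ) + 1) ≤ lam ((ω ⟨m.1, hSn m.1 m.2⟩ : ℕ) + 1) := hcon ⟨m.1, hSn m.1 m.2⟩ hmk
      have h2 : μ k ≤ μ ((m : ℕ) + 1) := by
        rcases eq_or_lt_of_le (Nat.succ_le_of_lt hmk) with h | h
        · exact le_of_eq (congrArg μ h.symm)
        · exact le_of_lt (hμ.2.1 _ _ (by omega) h hk2)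
      have h3 : lam k < lam ((ω ⟨m.1, hSn m.1 m.2⟩ : ℕ) + 1) := lt_of_lt_of_le hkk (h2.trans h1)
      set j := (ω ⟨m.1, hSn m.1 m.2⟩ : Fin n)
      have hjk : (j : ℕ) + 1 < k := by
        by_contra hjk
        push_neg at hjk
        rcases eq_or_lt_of_le hjk with h | h
        · rw [← h] at h3; omega
        · have := hlam.2.1 k ((j : ℕ) + 1) hk1 h (by omega)
          omega
      rw [hT, Finset.mem_image]
      exact ⟨⟨(j : ℕ), Finset.mem_range.mpr (by omega)⟩, Finset.mem_attach _ _, rfl⟩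
    have hlt : T.card < S.card := by omega
    obtain ⟨a, ha, b, hb, hne, heq⟩ :=
      Finset.exists_ne_map_eq_of_card_lt_of_maps_to hlt hmaps
    exact hne (ω.injective heq)
  obtain ⟨i, hik, hlti⟩ := key
  rw [Finset.prod_eq_zero (Finset.mem_univ i) (fallQ_nat_eq_zero hlti), zero_mul]
end

section
/- Let (λ(n))_{n≥1} be a sequence of strict partitions with |λ(n)| = n, and suppose that for every i ≥ 1 the limit γ_i = lim_{n→∞} λ_i(n)/n exists. Then γ_1 ≥ γ_2 ≥ ... ≥ 0 with ∑_{i≥1} γ_i ≤ 1, and for every odd integer m ≥ 3 the series ∑_{k≥1} γ_k^m converges and lim_{n→∞} p_m(λ(n))/n^m = ∑_{k≥1} γ_k^m. -/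
open Finset Filter

-- auxiliary lemmas
lemma aux_anti {l : ℕ} {μ : ℕ → ℕ} (h : IsStrictOfLen l μ) :
    ∀ i j, 1 ≤ i → i ≤ j → μ j ≤ μ i := by
  intro i j hi hij
  obtain ⟨hpos, hdec, hzero⟩ := h
  rcases le_or_gt j l with hjl | hjl
  · rcases eq_or_lt_of_le hij with rfl | hlt
    · exact le_refl _
    · exact (hdec i j hi hlt hjl).le
  · simp [hzero j hjl]

lemma aux_sum_le {l : ℕ} {μ : ℕ → ℕ} {n : ℕ} (h : IsStrictOfLen l μ)
    (hsum : ∑ i ∈ Finset.Icc 1 l, μ i = n) (N : ℕ) :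
    ∑ i ∈ Finset.Icc 1 N, μ i ≤ n := by
  obtain ⟨hpos, hdec, hzero⟩ := h
  rcases le_or_gt N l with hNl | hNl
  · calc ∑ i ∈ Finset.Icc 1 N, μ i ≤ ∑ i ∈ Finset.Icc 1 l, μ i :=
        Finset.sum_le_sum_of_subset (Finset.Icc_subset_Icc_right hNl)
    _ = n := hsum
  · have : ∑ i ∈ Finset.Icc 1 N, μ i = ∑ i ∈ Finset.Icc 1 l, μ i := by
      refine (Finset.sum_subset (Finset.Icc_subset_Icc_right hNl.le) ?_).symm
      intro x hx hx'
      simp only [Finset.mem_Icc] at hx hx'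
      exact hzero x (by omega)
    rw [this, hsum]

lemma aux_part_le {l : ℕ} {μ : ℕ → ℕ} {n : ℕ} (h : IsStrictOfLen l μ)
    (hsum : ∑ i ∈ Finset.Icc 1 l, μ i = n) (k : ℕ) :
    (k + 1) * μ (k + 1) ≤ n := by
  have h1 : (k + 1) * μ (k + 1) ≤ ∑ i ∈ Finset.Icc 1 (k + 1), μ i := by
    have := Finset.card_nsmul_le_sum (Finset.Icc 1 (k + 1)) μ (μ (k + 1))
      (fun i hi => aux_anti h i (k + 1) (Finset.mem_Icc.mp hi).1 (Finset.mem_Icc.mp hi).2)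
    simpa [Nat.card_Icc, smul_eq_mul] using this
  exact h1.trans (aux_sum_le h hsum _)

lemma aux_len_le {l : ℕ} {μ : ℕ → ℕ} {n : ℕ} (h : IsStrictOfLen l μ)
    (hsum : ∑ i ∈ Finset.Icc 1 l, μ i = n) : l ≤ n := by
  calc l = ∑ i ∈ Finset.Icc 1 l, 1 := by simp
  _ ≤ ∑ i ∈ Finset.Icc 1 l, μ i :=
      Finset.sum_le_sum (fun i hi => h.1 i (Finset.mem_Icc.mp hi).1 (Finset.mem_Icc.mp hi).2)
  _ = n := hsum

/-- if `λ(n)` are strict partitions with `|λ(n)| = n` and the limits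
`γ_i = lim_n λ_i(n)/n` exist, then `γ_1 ≥ γ_2 ≥ … ≥ 0`, `∑_i γ_i ≤ 1`, and for every
odd `m ≥ 3` the series `∑_k γ_k^m` converges and `lim_n p_m(λ(n))/n^m = ∑_k γ_k^m`.
(Since any partition of `n` has at most `n` parts, `p_m(λ(n)) = ∑_{i=1}^{n} λ_i(n)^m`.) -/
theorem limit_power_sums_of_limit_rows
    (Lam : ℕ → ℕ → ℕ)
    (hpart : ∀ n, 1 ≤ n → ∃ l, IsStrictOfLen l (Lam n) ∧ ∑ i ∈ Finset.Icc 1 l, Lam n i = n)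
    (γ : ℕ → ℝ)
    (hγ : ∀ i, 1 ≤ i →
      Tendsto (fun n : ℕ => (Lam n i : ℝ) / (n : ℝ)) atTop (nhds (γ i))) :
    (∀ i, 1 ≤ i → γ (i + 1) ≤ γ i) ∧ (∀ i, 1 ≤ i → 0 ≤ γ i) ∧
    Summable (fun i : ℕ => γ (i + 1)) ∧ (∑' i : ℕ, γ (i + 1)) ≤ 1 ∧
    (∀ m : ℕ, 3 ≤ m → Odd m →
      Summable (fun k : ℕ => γ (k + 1) ^ m) ∧
      Tendsto (fun n : ℕ => (∑ i ∈ Finset.Icc 1 n, (Lam n i : ℝ) ^ m) / (n : ℝ) ^ m)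
        atTop (nhds (∑' k : ℕ, γ (k + 1) ^ m))) := by
  -- basic bounds for n ≥ 1
  have hbound : ∀ n : ℕ, 1 ≤ n → ∀ k : ℕ, (Lam n (k + 1) : ℝ) / n ≤ 1 / (k + 1) := by
    intro n hn k
    obtain ⟨l, hl, hsum⟩ := hpart n hn
    have h := aux_part_le hl hsum k
    have hn' : (0:ℝ) < n := by exact_mod_cast hn
    rw [div_le_div_iff₀ hn' (by positivity)]
    have : ((k + 1) * Lam n (k + 1) : ℝ) ≤ n := by exact_mod_cast h
    nlinarith [this]
  have hnonneg : ∀ n : ℕ, ∀ k : ℕ, (0:ℝ) ≤ (Lam n k : ℝ) / n := by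
    intro n k; positivity
  -- part 1: antitone
  have hmono : ∀ i, 1 ≤ i → γ (i + 1) ≤ γ i := by
    intro i hi
    refine le_of_tendsto_of_tendsto (hγ (i + 1) (by omega)) (hγ i hi) ?_
    filter_upwards [eventually_ge_atTop 1] with n hn
    obtain ⟨l, hl, hsum⟩ := hpart n hn
    have := aux_anti hl i (i + 1) hi (by omega)
    have hn' : (0:ℝ) ≤ (n:ℝ) := by positivity
    gcongr
  -- part 2: nonneg
  have hγnn : ∀ i, 1 ≤ i → 0 ≤ γ i := by
    intro i hi
    refine le_of_tendsto_of_tendsto tendsto_const_nhds (hγ i hi) ?_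
    filter_upwards with n using hnonneg n i
  -- partial sums bound
  have hpartial : ∀ N : ℕ, ∑ k ∈ Finset.range N, γ (k + 1) ≤ 1 := by
    intro N
    have htend : Tendsto (fun n : ℕ => ∑ k ∈ Finset.range N, (Lam n (k + 1) : ℝ) / n)
        atTop (nhds (∑ k ∈ Finset.range N, γ (k + 1))) :=
      tendsto_finset_sum _ (fun k _ => hγ (k + 1) (by omega))
    refine le_of_tendsto htend ?_
    filter_upwards [eventually_ge_atTop 1] with n hn
    obtain ⟨l, hl, hsum⟩ := hpart n hn
    have hle : ∑ i ∈ Finset.Icc 1 N, Lam n i ≤ n := aux_sum_le hl hsum N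
    have hre : ∑ k ∈ Finset.range N, (Lam n (k + 1) : ℝ) / n
        = (∑ i ∈ Finset.Icc 1 N, (Lam n i : ℝ)) / n := by
      rw [Finset.sum_div, ← Finset.Ico_add_one_right_eq_Icc, Finset.sum_Ico_eq_sum_range]
      simp [add_comm 1]
    rw [hre]
    have hn' : (0:ℝ) < n := by exact_mod_cast hn
    rw [div_le_one hn']
    exact_mod_cast hle
  have hsummable : Summable (fun i : ℕ => γ (i + 1)) :=
    summable_of_sum_range_le (fun i => hγnn (i + 1) (by omega)) hpartial
  have htsum_le : (∑' i : ℕ, γ (i + 1)) ≤ 1 :=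
    Real.tsum_le_of_sum_range_le (fun i => hγnn (i + 1) (by omega)) hpartial
  refine ⟨hmono, hγnn, hsummable, htsum_le, ?_⟩
  intro m hm _
  -- dominated convergence setup
  set f : ℕ → ℕ → ℝ := fun n k => ((Lam n (k + 1) : ℝ) / n) ^ m with hf
  have hbd_sum : Summable (fun k : ℕ => (1 / ((k:ℝ) + 1)) ^ 2) := by
    have : Summable (fun k : ℕ => 1 / ((k:ℝ) ^ 2)) := by
      exact Real.summable_one_div_nat_pow.mpr one_lt_two
    have h2 := (summable_nat_add_iff 1).mpr this
    refine h2.congr fun k => ?_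
    push_cast
    rw [div_pow, one_pow]
  have hfk_bd : ∀ n : ℕ, ∀ k : ℕ, ‖f n k‖ ≤ (1 / ((k:ℝ) + 1)) ^ 2 := by
    intro n k
    have h0 : (0:ℝ) ≤ (Lam n (k + 1) : ℝ) / n := hnonneg n (k + 1)
    have h1 : (Lam n (k + 1) : ℝ) / n ≤ 1 / (k + 1) := by
      rcases Nat.eq_zero_or_pos n with rfl | hn
      · simp; positivity
      · exact hbound n hn k
    simp only [hf]
    rw [Real.norm_eq_abs, abs_of_nonneg (by positivity)]
    calc ((Lam n (k + 1) : ℝ) / n) ^ m ≤ (1 / ((k:ℝ) + 1)) ^ m :=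
        pow_le_pow_left₀ h0 h1 m
    _ ≤ (1 / ((k:ℝ) + 1)) ^ 2 := by
        refine pow_le_pow_of_le_one (by positivity) ?_ (by omega)
        rw [div_le_one (by positivity)]
        linarith [Nat.cast_nonneg (α := ℝ) k]
  have hlim : ∀ k : ℕ, Tendsto (fun n => f n k) atTop (nhds (γ (k + 1) ^ m)) :=
    fun k => (hγ (k + 1) (by omega)).pow m
  constructor
  · -- summability of γ^m
    refine Summable.of_nonneg_of_le (fun k => pow_nonneg (hγnn (k+1) (by omega)) m)
      (fun k => ?_) hbd_sum
    refine le_of_tendsto (hlim k) (Eventually.of_forall fun n => ?_)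
    calc f n k ≤ ‖f n k‖ := le_abs_self _
    _ ≤ (1 / ((k:ℝ) + 1)) ^ 2 := hfk_bd n k
  · have hT := tendsto_tsum_of_dominated_convergence (f := f) (g := fun k => γ (k + 1) ^ m)
      hbd_sum hlim (Eventually.of_forall fun n => hfk_bd n)
    refine hT.congr' ?_
    filter_upwards [eventually_ge_atTop 1] with n hn
    obtain ⟨l, hl, hsum⟩ := hpart n hn
    have hln : l ≤ n := aux_len_le hl hsum
    have hz : ∀ k ∉ Finset.range n, f n k = 0 := by
      intro k hk
      simp only [Finset.mem_range, not_lt] at hk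
      have : Lam n (k + 1) = 0 := hl.2.2 (k + 1) (by omega)
      simp [hf, this, zero_pow (by omega : m ≠ 0)]
    rw [tsum_eq_sum hz]
    have hn' : (0:ℝ) < n := by exact_mod_cast hn
    rw [← Finset.Ico_add_one_right_eq_Icc, Finset.sum_Ico_eq_sum_range, Nat.add_sub_cancel,
      Finset.sum_div]
    refine (Finset.sum_congr rfl fun k _ => ?_).symm
    simp only [hf, div_pow, add_comm 1 k]
end

section
/- Let (λ(n))_{n≥1} be a sequence of strict partitions with |λ(n)| = n. If for every odd integer m ≥ 3 the limit lim_{n→∞} p_m(λ(n))/n^m exists, then for every i ≥ 1 the limit lim_{n→∞} λ_i(n)/n exists. -/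
open Finset Filter

lemma myBoundSummable : Summable (fun i : ℕ => (((i : ℝ) + 1)⁻¹) ^ 3) := by
  have h : Summable (fun n : ℕ => 1 / (n : ℝ) ^ 3) := Real.summable_one_div_nat_pow.mpr (by norm_num)
  have := (summable_nat_add_iff (f := fun n : ℕ => 1 / (n : ℝ) ^ 3) 1).mpr h
  refine this.congr fun i => ?_
  push_cast
  rw [one_div, ← inv_pow]

lemma myPowLe {x : ℝ} {i m : ℕ} (hm : 3 ≤ m) (hx0 : 0 ≤ x) (hxB : x ≤ ((i : ℝ) + 1)⁻¹) :
    x ^ m ≤ (((i : ℝ) + 1)⁻¹) ^ 3 := by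
  have hx1 : x ≤ 1 := hxB.trans (by
    rw [inv_le_one_iff₀]; right; linarith [Nat.cast_nonneg (α := ℝ) i])
  calc x ^ m ≤ x ^ 3 := pow_le_pow_of_le_one hx0 hx1 hm
    _ ≤ (((i : ℝ) + 1)⁻¹) ^ 3 := by
        apply pow_le_pow_left₀ hx0 hxB

set_option maxHeartbeats 1000000 in
lemma powerSumsAux (a b : ℕ → ℝ)
    (ha0 : ∀ i, 0 ≤ a i) (hb0 : ∀ i, 0 ≤ b i)
    (haB : ∀ i, a i ≤ ((i : ℝ) + 1)⁻¹) (hbB : ∀ i, b i ≤ ((i : ℝ) + 1)⁻¹)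
    (hbA : Antitone b)
    (heq : ∀ m : ℕ, 3 ≤ m → Odd m → ∑' i, (a i) ^ m = ∑' i, (b i) ^ m)
    (i0 : ℕ) (hlt : b i0 < a i0) (hpre : ∀ j, j < i0 → a j = b j) : False := by
  set c := a i0 with hc_def
  set d := b i0 with hd_def
  have hc : 0 < c := lt_of_le_of_lt (hb0 i0) hlt
  set r := d / c with hr_def
  have hr0 : 0 ≤ r := div_nonneg (hb0 i0) hc.le
  have hr1 : r < 1 := (div_lt_one hc).mpr hlt
  set C := ∑' i : ℕ, (((i : ℝ) + 1)⁻¹) ^ 3 with hC_def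
  -- find k with (r^2)^k * C < c^3
  have htend : Tendsto (fun k : ℕ => (r ^ 2) ^ k * C) atTop (nhds 0) := by
    have h1 : Tendsto (fun k : ℕ => (r ^ 2) ^ k) atTop (nhds 0) :=
      tendsto_pow_atTop_nhds_zero_of_lt_one (sq_nonneg r)
        (by nlinarith)
    simpa using h1.mul_const C
  obtain ⟨k, hk⟩ := (htend.eventually_lt_const (by positivity : (0:ℝ) < c ^ 3)).exists
  set m := 2 * k + 3 with hm_def
  have hm3 : 3 ≤ m := by omega
  have hmodd : Odd m := ⟨k + 1, by omega⟩
  -- summability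
  have hsa : Summable (fun i => a i ^ m) :=
    Summable.of_nonneg_of_le (fun i => pow_nonneg (ha0 i) m)
      (fun i => myPowLe hm3 (ha0 i) (haB i)) myBoundSummable
  have hsb : Summable (fun i => b i ^ m) :=
    Summable.of_nonneg_of_le (fun i => pow_nonneg (hb0 i) m)
      (fun i => myPowLe hm3 (hb0 i) (hbB i)) myBoundSummable
  -- shifted equality
  have heqm := heq m hm3 hmodd
  have hsplit_a := (Summable.sum_add_tsum_nat_add (f := fun i => a i ^ m) i0 hsa).symm
  have hsplit_b := (Summable.sum_add_tsum_nat_add (f := fun i => b i ^ m) i0 hsb).symm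
  have hfin : ∑ i ∈ range i0, a i ^ m = ∑ i ∈ range i0, b i ^ m := by
    apply Finset.sum_congr rfl
    intro j hj
    rw [hpre j (Finset.mem_range.mp hj)]
  have heq' : ∑' i, a (i + i0) ^ m = ∑' i, b (i + i0) ^ m := by
    have := heqm
    rw [hsplit_a, hsplit_b, hfin] at this
    linarith
  -- lower bound on LHS
  have hsa' : Summable (fun i => a (i + i0) ^ m) := (summable_nat_add_iff i0).mpr hsa
  have hsb' : Summable (fun i => b (i + i0) ^ m) := (summable_nat_add_iff i0).mpr hsb
  have hlow : c ^ m ≤ ∑' i, a (i + i0) ^ m := by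
    have := Summable.le_tsum hsa' 0 (fun j _ => pow_nonneg (ha0 _) m)
    simpa using this
  -- upper bound on RHS
  have hup : ∑' i, b (i + i0) ^ m ≤ d ^ (2 * k) * C := by
    have hCs' : Summable (fun i : ℕ => d ^ (2 * k) * (((i : ℝ) + 1)⁻¹) ^ 3) :=
      myBoundSummable.mul_left _
    have hterm : ∀ i : ℕ, b (i + i0) ^ m ≤ d ^ (2 * k) * (((i : ℝ) + 1)⁻¹) ^ 3 := by
      intro i
      have hbd : b (i + i0) ≤ d := hbA (Nat.le_add_left i0 i)
      have hbB' : b (i + i0) ≤ ((i : ℝ) + 1)⁻¹ := by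
        refine (hbB (i + i0)).trans ?_
        apply inv_anti₀ (by positivity)
        push_cast; linarith
      have h3 : b (i + i0) ^ 3 ≤ (((i : ℝ) + 1)⁻¹) ^ 3 := pow_le_pow_left₀ (hb0 _) hbB' 3
      have h2k : b (i + i0) ^ (2 * k) ≤ d ^ (2 * k) := pow_le_pow_left₀ (hb0 _) hbd (2 * k)
      calc b (i + i0) ^ m = b (i + i0) ^ (2 * k) * b (i + i0) ^ 3 := by
            rw [← pow_add]
        _ ≤ d ^ (2 * k) * (((i : ℝ) + 1)⁻¹) ^ 3 := by
            exact mul_le_mul h2k h3 (pow_nonneg (hb0 _) 3) (pow_nonneg (hb0 i0) _)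
    calc ∑' i, b (i + i0) ^ m ≤ ∑' i : ℕ, d ^ (2 * k) * (((i : ℝ) + 1)⁻¹) ^ 3 :=
          Summable.tsum_le_tsum hterm hsb' hCs'
      _ = d ^ (2 * k) * C := tsum_mul_left
  -- combine
  have hkey : c ^ m ≤ d ^ (2 * k) * C := by
    rw [heq'] at hlow; exact hlow.trans hup
  have hcm : c ^ m = c ^ (2 * k) * c ^ 3 := by rw [← pow_add]
  have hrk : (r ^ 2) ^ k * c ^ (2 * k) = d ^ (2 * k) := by
    rw [← pow_mul, hr_def, div_pow, mul_comm 2 k, mul_comm k 2,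
      div_mul_cancel₀]
    positivity
  have hcpos : (0:ℝ) < c ^ (2 * k) := by positivity
  have h1 : d ^ (2 * k) * C < c ^ (2 * k) * c ^ 3 := by
    calc d ^ (2 * k) * C = ((r ^ 2) ^ k * C) * c ^ (2 * k) := by rw [← hrk]; ring
      _ < c ^ 3 * c ^ (2 * k) := mul_lt_mul_of_pos_right hk hcpos
      _ = c ^ (2 * k) * c ^ 3 := by ring
  linarith

lemma powerSumsUnique (a b : ℕ → ℝ)
    (ha0 : ∀ i, 0 ≤ a i) (hb0 : ∀ i, 0 ≤ b i)
    (haB : ∀ i, a i ≤ ((i : ℝ) + 1)⁻¹) (hbB : ∀ i, b i ≤ ((i : ℝ) + 1)⁻¹)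
    (haA : Antitone a) (hbA : Antitone b)
    (heq : ∀ m : ℕ, 3 ≤ m → Odd m → ∑' i, (a i) ^ m = ∑' i, (b i) ^ m) : a = b := by
  funext i
  induction i using Nat.strong_induction_on with
  | _ i ih =>
    by_contra hne
    rcases lt_or_gt_of_ne hne with hlt | hlt
    · exact powerSumsAux b a hb0 ha0 hbB haB haA
        (fun m h1 h2 => (heq m h1 h2).symm) i hlt (fun j hj => (ih j hj).symm)
    · exact powerSumsAux a b ha0 hb0 haB hbB hbA heq i hlt ih

/-- if `λ(n)` are strict partitions with `|λ(n)| = n` and for every odd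
`m ≥ 3` the limit `lim_n p_m(λ(n))/n^m` exists, then for every `i ≥ 1` the limit
`lim_n λ_i(n)/n` exists. (Since any partition of `n` has at most `n` parts,
`p_m(λ(n)) = ∑_{i=1}^{n} λ_i(n)^m`.) -/
theorem limit_rows_of_limit_power_sums
    (Lam : ℕ → ℕ → ℕ)
    (hpart : ∀ n, 1 ≤ n → ∃ l, IsStrictOfLen l (Lam n) ∧ ∑ i ∈ Finset.Icc 1 l, Lam n i = n)
    (h : ∀ m : ℕ, 3 ≤ m → Odd m → ∃ L : ℝ,
      Tendsto (fun n : ℕ => (∑ i ∈ Finset.Icc 1 n, (Lam n i : ℝ) ^ m) / (n : ℝ) ^ m)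
        atTop (nhds L)) :
    ∀ i, 1 ≤ i → ∃ c : ℝ,
      Tendsto (fun n : ℕ => (Lam n i : ℝ) / (n : ℝ)) atTop (nhds c) := by
  classical
  -- structural facts
  have hzeroN : ∀ n, 1 ≤ n → ∀ i, n < i → Lam n i = 0 := by
    intro n hn i hi
    obtain ⟨l, ⟨hpos, hdec, hz⟩, hsum⟩ := hpart n hn
    apply hz
    have hl : l ≤ n := by
      calc l = ∑ _j ∈ Finset.Icc 1 l, 1 := by simp
        _ ≤ ∑ j ∈ Finset.Icc 1 l, Lam n j := Finset.sum_le_sum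
            (fun j hj => hpos j (Finset.mem_Icc.mp hj).1 (Finset.mem_Icc.mp hj).2)
        _ = n := hsum
    omega
  have hbound : ∀ n, 1 ≤ n → ∀ i : ℕ, (i + 1) * Lam n (i + 1) ≤ n := by
    intro n hn i
    obtain ⟨l, ⟨hpos, hdec, hz⟩, hsum⟩ := hpart n hn
    by_cases hil : i + 1 ≤ l
    · have h1 : ∀ j ∈ Finset.Icc 1 (i + 1), Lam n (i + 1) ≤ Lam n j := by
        intro j hj
        obtain ⟨hj1, hj2⟩ := Finset.mem_Icc.mp hj
        rcases eq_or_lt_of_le hj2 with he | hlt'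
        · rw [he]
        · exact (hdec j (i + 1) hj1 hlt' hil).le
      calc (i + 1) * Lam n (i + 1) = ∑ _j ∈ Finset.Icc 1 (i + 1), Lam n (i + 1) := by
            simp [mul_comm]
        _ ≤ ∑ j ∈ Finset.Icc 1 (i + 1), Lam n j := Finset.sum_le_sum h1
        _ ≤ ∑ j ∈ Finset.Icc 1 l, Lam n j :=
            Finset.sum_le_sum_of_subset (Finset.Icc_subset_Icc_right hil)
        _ = n := hsum
    · rw [hz _ (by omega)]
      simp
  have hmono : ∀ n, 1 ≤ n → ∀ i : ℕ, Lam n (i + 2) ≤ Lam n (i + 1) := by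
    intro n hn i
    obtain ⟨l, ⟨hpos, hdec, hz⟩, hsum⟩ := hpart n hn
    by_cases hil : i + 2 ≤ l
    · exact (hdec (i + 1) (i + 2) (by omega) (by omega) hil).le
    · rw [hz _ (by omega)]; exact Nat.zero_le _
  -- normalized rows
  set y : ℕ → ℕ → ℝ := fun n i => (Lam n (i + 1) : ℝ) / n with hy_def
  have hy0 : ∀ n i, 0 ≤ y n i := fun n i => div_nonneg (Nat.cast_nonneg _) (Nat.cast_nonneg _)
  have hyB : ∀ n i, y n i ≤ ((i : ℝ) + 1)⁻¹ := by
    intro n i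
    rcases Nat.eq_zero_or_pos n with rfl | hn
    · simp only [hy_def, Nat.cast_zero, div_zero]
      positivity
    · have hb' : ((i : ℝ) + 1) * (Lam n (i + 1) : ℝ) ≤ n := by
        exact_mod_cast hbound n hn i
      have hn' : (0 : ℝ) < n := by exact_mod_cast hn
      simp only [hy_def]
      rw [div_le_iff₀ hn', inv_mul_eq_div, le_div_iff₀ (by positivity : (0:ℝ) < (i : ℝ) + 1)]
      linarith
  have hyA : ∀ n, Antitone (y n) := by
    intro n
    apply antitone_nat_of_succ_le
    intro i
    rcases Nat.eq_zero_or_pos n with rfl | hn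
    · simp [hy_def]
    · simp only [hy_def]
      gcongr
      exact_mod_cast hmono n hn i
  have hyz : ∀ n i, n ≤ i → y n i = 0 := by
    intro n i hi
    rcases Nat.eq_zero_or_pos n with rfl | hn
    · simp [hy_def]
    · simp [hy_def, hzeroN n hn (i + 1) (by omega)]
  -- power sums
  have hPS : ∀ m : ℕ, 3 ≤ m → ∀ n, 1 ≤ n →
      (∑ i ∈ Finset.Icc 1 n, (Lam n i : ℝ) ^ m) / (n : ℝ) ^ m = ∑' i, (y n i) ^ m := by
    intro m hm n hn
    have h1 : (∑ i ∈ Finset.Icc 1 n, (Lam n i : ℝ) ^ m) / (n : ℝ) ^ m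
        = ∑ i ∈ Finset.Icc 1 n, ((Lam n i : ℝ) / n) ^ m := by
      rw [Finset.sum_div]
      exact Finset.sum_congr rfl fun i _ => (div_pow _ _ _).symm
    have h2 : ∑' i, (y n i) ^ m = ∑ i ∈ Finset.range n, (y n i) ^ m := by
      apply tsum_eq_sum
      intro i hi
      have hni : n ≤ i := by
        by_contra hc
        exact hi (Finset.mem_range.mpr (by omega))
      rw [hyz n i hni, zero_pow (by omega)]
    rw [h1, h2, ← Finset.Ico_add_one_right_eq_Icc, Finset.sum_Ico_eq_sum_range]
    refine Finset.sum_congr (by norm_num) fun i _ => by rw [hy_def]; norm_num [add_comm 1 i]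
  -- the limits
  have hLe : ∀ m : ℕ, ∃ L : ℝ, 3 ≤ m → Odd m →
      Tendsto (fun n => ∑' i, (y n i) ^ m) atTop (nhds L) := by
    intro m
    by_cases hm : 3 ≤ m ∧ Odd m
    · obtain ⟨L, hLt⟩ := h m hm.1 hm.2
      refine ⟨L, fun _ _ => hLt.congr' ?_⟩
      filter_upwards [eventually_ge_atTop 1] with n hn
      exact hPS m hm.1 n hn
    · exact ⟨0, fun h1 h2 => absurd ⟨h1, h2⟩ hm⟩
  choose L hL using hLe
  -- compactness
  have hKc : IsCompact (Set.univ.pi fun i : ℕ => Set.Icc (0 : ℝ) ((i : ℝ) + 1)⁻¹) :=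
    isCompact_univ_pi fun i => isCompact_Icc
  have hyK : ∀ n, y n ∈ Set.univ.pi fun i : ℕ => Set.Icc (0 : ℝ) ((i : ℝ) + 1)⁻¹ :=
    fun n => Set.mem_univ_pi.mpr fun i => ⟨hy0 n i, hyB n i⟩
  -- cluster points
  have cluster : ∀ (a : ℕ → ℝ) (u : ℕ → ℕ), Tendsto u atTop atTop →
      Tendsto (fun j => y (u j)) atTop (nhds a) →
      (∀ i, 0 ≤ a i) ∧ (∀ i, a i ≤ ((i : ℝ) + 1)⁻¹) ∧ Antitone a ∧
        (∀ m, 3 ≤ m → Odd m → ∑' i, (a i) ^ m = L m) := by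
    intro a u hu hconv
    have hcoord : ∀ i, Tendsto (fun j => y (u j) i) atTop (nhds (a i)) := fun i =>
      (tendsto_pi_nhds.mp hconv) i
    refine ⟨fun i => ge_of_tendsto (hcoord i) (Eventually.of_forall fun j => hy0 _ i),
      fun i => le_of_tendsto (hcoord i) (Eventually.of_forall fun j => hyB _ i),
      antitone_nat_of_succ_le fun i =>
        le_of_tendsto_of_tendsto' (hcoord (i + 1)) (hcoord i)
          (fun j => hyA (u j) (Nat.le_succ i)),
      ?_⟩
    intro m hm3 hmo
    have h1 : Tendsto (fun j => ∑' i, (y (u j) i) ^ m) atTop (nhds (∑' i, (a i) ^ m)) := by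
      apply tendsto_tsum_of_dominated_convergence myBoundSummable
        (fun i => (hcoord i).pow m)
      refine Eventually.of_forall fun j i => ?_
      rw [Real.norm_eq_abs, abs_of_nonneg (pow_nonneg (hy0 _ i) m)]
      exact myPowLe hm3 (hy0 _ i) (hyB _ i)
    exact tendsto_nhds_unique h1 ((hL m hm3 hmo).comp hu)
  -- the limit
  obtain ⟨a, _, φ, hφ, hconv⟩ := hKc.tendsto_subseq hyK
  have ha := cluster a φ hφ.tendsto_atTop hconv
  have hmain : Tendsto y atTop (nhds a) := by
    apply tendsto_of_subseq_tendsto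
    intro ns hns
    obtain ⟨b, _, ψ, hψ, hbconv⟩ := hKc.tendsto_subseq (fun j => hyK (ns j))
    have hb := cluster b (ns ∘ ψ) (hns.comp hψ.tendsto_atTop) hbconv
    have hab : b = a := powerSumsUnique b a hb.1 ha.1 hb.2.1 ha.2.1 hb.2.2.1 ha.2.2.1
      (fun m h1 h2 => by rw [hb.2.2.2 m h1 h2, ha.2.2.2 m h1 h2])
    exact ⟨ψ, hab ▸ hbconv⟩
  intro i hi
  refine ⟨a (i - 1), ?_⟩
  have hcoord : Tendsto (fun n => y n (i - 1)) atTop (nhds (a (i - 1))) :=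
    (tendsto_pi_nhds.mp hmain) (i - 1)
  have hfe : (fun n : ℕ => (Lam n i : ℝ) / n) = fun n => y n (i - 1) := by
    funext n
    rw [hy_def]
    simp [Nat.sub_add_cancel hi]
  rw [hfe]
  exact hcoord
end

section
/- Let γ = (γ_i)_{i≥1} and δ = (δ_i)_{i≥1} be nonincreasing sequences of nonnegative real numbers with ∑_{i≥1} γ_i ≤ 1 and ∑_{i≥1} δ_i ≤ 1. If ∑_{k≥1} γ_k^m = ∑_{k≥1} δ_k^m for every odd integer m ≥ 3, then γ_i = δ_i for all i. -/
/-!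
If `γ` and `δ` agree before index `i` and `δ i < γ i`, then for odd `m` the tails from `i` of
the `m`-th power sums must agree as well. The `γ`-tail is at least `γ i ^ m`, while by monotonicity
the `δ`-tail is at most `δ i ^ (m - 1) * ∑_{k ≥ i} δ k`, which is eventually smaller since
`(δ i / γ i) ^ (m - 1) → 0`. By strong induction the sequences agree everywhere.
-/

open Filter Topology

lemma eventually_pow_mul_lt_pow_succ {a b : ℝ} (S : ℝ) (hb : 0 ≤ b) (hab : b < a) :
    ∀ᶠ n in atTop, b ^ n * S < a ^ (n + 1) := by
  have ha : 0 < a := hb.trans_lt hab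
  have hlim : Tendsto (fun n => (b / a) ^ n * S) atTop (𝓝 0) := by
    simpa using (tendsto_pow_atTop_nhds_zero_of_lt_one (div_nonneg hb ha.le)
      ((div_lt_one ha).2 hab)).mul_const S
  filter_upwards [hlim.eventually_lt_const ha] with n hn
  rwa [div_pow, div_mul_eq_mul_div, div_lt_iff₀ (pow_pos ha n), ← pow_succ'] at hn

lemma exists_odd_pow_mul_lt_pow {a b : ℝ} (S : ℝ) (hb : 0 ≤ b) (hab : b < a) :
    ∃ n, b ^ (2 * n + 2) * S < a ^ (2 * n + 3) := by
  obtain ⟨N, hN⟩ := eventually_atTop.1 (eventually_pow_mul_lt_pow_succ S hb hab)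
  exact ⟨N, hN _ (by omega)⟩

section Antitone

variable {f : ℕ → ℝ}

lemma pow_succ_le_pow_mul_of_antitone (hf : Antitone f) (hf0 : ∀ i, 0 ≤ f i) {i k : ℕ}
    (hik : i ≤ k) (m : ℕ) : f k ^ (m + 1) ≤ f i ^ m * f k := by
  rw [pow_succ]
  exact mul_le_mul_of_nonneg_right (pow_le_pow_left₀ (hf0 k) (hf hik) m) (hf0 k)

lemma summable_pow_succ_of_antitone (hf : Antitone f) (hf0 : ∀ i, 0 ≤ f i) (hs : Summable f)
    (m : ℕ) : Summable fun k => f k ^ (m + 1) :=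
  (hs.mul_left (f 0 ^ m)).of_nonneg_of_le (fun k => pow_nonneg (hf0 k) _)
    fun k => pow_succ_le_pow_mul_of_antitone hf hf0 (Nat.zero_le k) m

lemma tsum_pow_succ_nat_add_le (hf : Antitone f) (hf0 : ∀ i, 0 ≤ f i) (hs : Summable f)
    (i m : ℕ) : ∑' k, f (k + i) ^ (m + 1) ≤ f i ^ m * ∑' k, f (k + i) := by
  rw [← tsum_mul_left]
  exact Summable.tsum_le_tsum
    (fun k => pow_succ_le_pow_mul_of_antitone hf hf0 (Nat.le_add_left i k) m)
    ((summable_nat_add_iff i).2 (summable_pow_succ_of_antitone hf hf0 hs m))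
    (((summable_nat_add_iff i).2 hs).mul_left _)

end Antitone

lemma le_of_odd_power_sums_eq {f g : ℕ → ℝ} (hf : Antitone f) (hf0 : ∀ i, 0 ≤ f i)
    (hfs : Summable f) (hg : Antitone g) (hg0 : ∀ i, 0 ≤ g i) (hgs : Summable g)
    (h : ∀ m : ℕ, 3 ≤ m → Odd m → ∑' k, f k ^ m = ∑' k, g k ^ m)
    {i : ℕ} (hlt : ∀ j < i, f j = g j) : f i ≤ g i := by
  by_contra! hgf
  obtain ⟨n, hn⟩ := exists_odd_pow_mul_lt_pow (∑' k, g (k + i)) (hg0 i) hgf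
  have hfm := summable_pow_succ_of_antitone hf hf0 hfs (2 * n + 2)
  have hgm := summable_pow_succ_of_antitone hg hg0 hgs (2 * n + 2)
  have hhead :
      ∑ k ∈ Finset.range i, f k ^ (2 * n + 3) = ∑ k ∈ Finset.range i, g k ^ (2 * n + 3) :=
    Finset.sum_congr rfl fun j hj => by rw [hlt j (Finset.mem_range.1 hj)]
  have htail : ∑' k, f (k + i) ^ (2 * n + 3) = ∑' k, g (k + i) ^ (2 * n + 3) := by
    have := h (2 * n + 3) (by omega) ⟨n + 1, by ring⟩
    rw [← hfm.sum_add_tsum_nat_add i, ← hgm.sum_add_tsum_nat_add i, hhead] at this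
    exact add_left_cancel this
  have hf_tail : f i ^ (2 * n + 3) ≤ ∑' k, f (k + i) ^ (2 * n + 3) := by
    simpa using ((summable_nat_add_iff i).2 hfm).le_tsum 0 fun k _ => pow_nonneg (hf0 _) _
  have hg_tail := tsum_pow_succ_nat_add_le hg hg0 hgs i (2 * n + 2)
  linarith

theorem eq_of_odd_power_sums_eq_general
    (γ δ : ℕ → ℝ)
    (hγmono : ∀ i, γ (i + 1) ≤ γ i) (hγnonneg : ∀ i, 0 ≤ γ i)
    (hγsum : Summable γ)
    (hδmono : ∀ i, δ (i + 1) ≤ δ i) (hδnonneg : ∀ i, 0 ≤ δ i)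
    (hδsum : Summable δ)
    (h : ∀ m : ℕ, 3 ≤ m → Odd m → (∑' k : ℕ, γ k ^ m) = ∑' k : ℕ, δ k ^ m) :
    γ = δ := by
  have hγ : Antitone γ := antitone_nat_of_succ_le hγmono
  have hδ : Antitone δ := antitone_nat_of_succ_le hδmono
  funext i
  induction i using Nat.strong_induction_on with
  | _ i ih =>
    exact le_antisymm
      (le_of_odd_power_sums_eq hγ hγnonneg hγsum hδ hδnonneg hδsum h ih)
      (le_of_odd_power_sums_eq hδ hδnonneg hδsum hγ hγnonneg hγsum
        (fun m hm hodd => (h m hm hodd).symm) fun j hj => (ih j hj).symm)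

/-- two nonincreasing sequences of nonnegative reals with sums at most `1`
that have the same odd power sums `∑_k γ_k^m` (for all odd `m ≥ 3`) coincide. -/
theorem eq_of_odd_power_sums_eq
    (γ δ : ℕ → ℝ)
    (hγmono : ∀ i, γ (i + 1) ≤ γ i) (hγnonneg : ∀ i, 0 ≤ γ i)
    (hγsum : Summable γ) (hγone : (∑' i : ℕ, γ i) ≤ 1)
    (hδmono : ∀ i, δ (i + 1) ≤ δ i) (hδnonneg : ∀ i, 0 ≤ δ i)
    (hδsum : Summable δ) (hδone : (∑' i : ℕ, δ i) ≤ 1)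
    (h : ∀ m : ℕ, 3 ≤ m → Odd m → (∑' k : ℕ, γ k ^ m) = ∑' k : ℕ, δ k ^ m) :
    γ = δ :=
  eq_of_odd_power_sums_eq_general γ δ hγmono hγnonneg hγsum hδmono hδnonneg hδsum h
end
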